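/- arXiv:2511.23381 — 9 statements merged into one kernel-verified Lean document; each statement's English description precedes it below -/
import Mathlib

section
/- Let p be a prime with p > 3, let e ∈ {1,2,3,4,6} and e₀ ≥ 1 be integers, and let G be a subgroup of GL₂(𝔽_p) such that G ∩ SL₂(𝔽_p) is trivial. Suppose that some GL₂(𝔽_p)-conjugate of D^{e·e₀} or some GL₂(𝔽_p)-conjugate of C_ns(p)^{e·e₀} is contained in G. If p > 12·e₀ + 1, then there exists m ∈ GL₂(𝔽_p) such that D^{e·e₀} ⊆ m G m⁻¹ ⊆ C_s(p). -/
open Matrix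

abbrev GL2 (p : ℕ) := GL (Fin 2) (ZMod p)

/-- The subgroup `SL₂` of `GL₂(ℤ/nℤ)`, i.e. the kernel of the determinant. -/
def SL2sub (n : ℕ) : Subgroup (GL (Fin 2) (ZMod n)) :=
  (Matrix.GeneralLinearGroup.det : GL (Fin 2) (ZMod n) →* (ZMod n)ˣ).ker

/-- The split Cartan subgroup: diagonal matrices in `GL₂(𝔽_p)`. -/
def Cs (p : ℕ) : Subgroup (GL2 p) where
  carrier := { g | (g : Matrix (Fin 2) (Fin 2) (ZMod p)) 0 1 = 0 ∧
      (g : Matrix (Fin 2) (Fin 2) (ZMod p)) 1 0 = 0 }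
  one_mem' := by simp
  mul_mem' := by
    rintro a b ⟨ha1, ha2⟩ ⟨hb1, hb2⟩
    refine ⟨?_, ?_⟩ <;>
      simp [Units.val_mul, Matrix.mul_apply, Fin.sum_univ_two, ha1, ha2, hb1, hb2]
  inv_mem' := by
    rintro a ⟨h1, h2⟩
    have h : ((a⁻¹ : GL2 p) : Matrix (Fin 2) (Fin 2) (ZMod p))
        = Ring.inverse ((a : Matrix (Fin 2) (Fin 2) (ZMod p)).det) •
          Matrix.adjugate (a : Matrix (Fin 2) (Fin 2) (ZMod p)) := by
      rw [Matrix.coe_units_inv, Matrix.inv_def]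
    refine ⟨?_, ?_⟩ <;> simp [h, Matrix.adjugate_fin_two, h1, h2]

/-- The Borel subgroup: upper triangular matrices in `GL₂(𝔽_p)`. -/
def B0 (p : ℕ) : Subgroup (GL2 p) where
  carrier := { g | (g : Matrix (Fin 2) (Fin 2) (ZMod p)) 1 0 = 0 }
  one_mem' := by simp
  mul_mem' := by
    intro a b ha hb
    simp only [Set.mem_setOf_eq] at *
    simp [Units.val_mul, Matrix.mul_apply, Fin.sum_univ_two, ha, hb]
  inv_mem' := by
    intro a h
    simp only [Set.mem_setOf_eq] at *
    have hh : ((a⁻¹ : GL2 p) : Matrix (Fin 2) (Fin 2) (ZMod p))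
        = Ring.inverse ((a : Matrix (Fin 2) (Fin 2) (ZMod p)).det) •
          Matrix.adjugate (a : Matrix (Fin 2) (Fin 2) (ZMod p)) := by
      rw [Matrix.coe_units_inv, Matrix.inv_def]
    simp [hh, Matrix.adjugate_fin_two, h]

/-- The subgroup of scalar matrices in `GL₂(𝔽_p)`. -/
def Zs (p : ℕ) : Subgroup (GL2 p) where
  carrier := { g | (g : Matrix (Fin 2) (Fin 2) (ZMod p)) 0 1 = 0 ∧
      (g : Matrix (Fin 2) (Fin 2) (ZMod p)) 1 0 = 0 ∧
      (g : Matrix (Fin 2) (Fin 2) (ZMod p)) 1 1 = (g : Matrix (Fin 2) (Fin 2) (ZMod p)) 0 0 }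
  one_mem' := by simp
  mul_mem' := by
    rintro a b ⟨ha1, ha2, ha3⟩ ⟨hb1, hb2, hb3⟩
    refine ⟨?_, ?_, ?_⟩ <;>
      simp [Units.val_mul, Matrix.mul_apply, Fin.sum_univ_two, ha1, ha2, ha3, hb1, hb2, hb3]
  inv_mem' := by
    rintro a ⟨h1, h2, h3⟩
    have hh : ((a⁻¹ : GL2 p) : Matrix (Fin 2) (Fin 2) (ZMod p))
        = Ring.inverse ((a : Matrix (Fin 2) (Fin 2) (ZMod p)).det) •
          Matrix.adjugate (a : Matrix (Fin 2) (Fin 2) (ZMod p)) := by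
      rw [Matrix.coe_units_inv, Matrix.inv_def]
    refine ⟨?_, ?_, ?_⟩ <;> simp [hh, Matrix.adjugate_fin_two, h1, h2, h3]

/-- The normalizer of the split Cartan subgroup: diagonal and antidiagonal matrices. -/
def Ns (p : ℕ) : Subgroup (GL2 p) where
  carrier := { g | ((g : Matrix (Fin 2) (Fin 2) (ZMod p)) 0 1 = 0 ∧
      (g : Matrix (Fin 2) (Fin 2) (ZMod p)) 1 0 = 0) ∨
      ((g : Matrix (Fin 2) (Fin 2) (ZMod p)) 0 0 = 0 ∧
      (g : Matrix (Fin 2) (Fin 2) (ZMod p)) 1 1 = 0) }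
  one_mem' := by simp
  mul_mem' := by
    rintro a b (⟨ha1, ha2⟩ | ⟨ha1, ha2⟩) (⟨hb1, hb2⟩ | ⟨hb1, hb2⟩)
    · refine Or.inl ⟨?_, ?_⟩ <;>
        simp [Units.val_mul, Matrix.mul_apply, Fin.sum_univ_two, ha1, ha2, hb1, hb2]
    · refine Or.inr ⟨?_, ?_⟩ <;>
        simp [Units.val_mul, Matrix.mul_apply, Fin.sum_univ_two, ha1, ha2, hb1, hb2]
    · refine Or.inr ⟨?_, ?_⟩ <;>
        simp [Units.val_mul, Matrix.mul_apply, Fin.sum_univ_two, ha1, ha2, hb1, hb2]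
    · refine Or.inl ⟨?_, ?_⟩ <;>
        simp [Units.val_mul, Matrix.mul_apply, Fin.sum_univ_two, ha1, ha2, hb1, hb2]
  inv_mem' := by
    intro a h
    have hh : ((a⁻¹ : GL2 p) : Matrix (Fin 2) (Fin 2) (ZMod p))
        = Ring.inverse ((a : Matrix (Fin 2) (Fin 2) (ZMod p)).det) •
          Matrix.adjugate (a : Matrix (Fin 2) (Fin 2) (ZMod p)) := by
      rw [Matrix.coe_units_inv, Matrix.inv_def]
    rcases h with ⟨h1, h2⟩ | ⟨h1, h2⟩
    · refine Or.inl ⟨?_, ?_⟩ <;> simp [hh, Matrix.adjugate_fin_two, h1, h2]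
    · refine Or.inr ⟨?_, ?_⟩ <;> simp [hh, Matrix.adjugate_fin_two, h1, h2]

/-- The nonsplit Cartan subgroup attached to a nonsquare `ε`:
invertible matrices of the form `[[a, bε], [b, a]]`. -/
def Cns (p : ℕ) (ε : ZMod p) : Subgroup (GL2 p) where
  carrier := { g | (g : Matrix (Fin 2) (Fin 2) (ZMod p)) 1 1 =
      (g : Matrix (Fin 2) (Fin 2) (ZMod p)) 0 0 ∧
      (g : Matrix (Fin 2) (Fin 2) (ZMod p)) 0 1 = ε * (g : Matrix (Fin 2) (Fin 2) (ZMod p)) 1 0 }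
  one_mem' := by simp
  mul_mem' := by
    rintro a b ⟨ha1, ha2⟩ ⟨hb1, hb2⟩
    refine ⟨?_, ?_⟩ <;>
      simp [Units.val_mul, Matrix.mul_apply, Fin.sum_univ_two, ha1, ha2, hb1, hb2] <;>
      try ring
  inv_mem' := by
    rintro a ⟨h1, h2⟩
    have hh : ((a⁻¹ : GL2 p) : Matrix (Fin 2) (Fin 2) (ZMod p))
        = Ring.inverse ((a : Matrix (Fin 2) (Fin 2) (ZMod p)).det) •
          Matrix.adjugate (a : Matrix (Fin 2) (Fin 2) (ZMod p)) := by
      rw [Matrix.coe_units_inv, Matrix.inv_def]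
    refine ⟨?_, ?_⟩ <;> simp [hh, Matrix.adjugate_fin_two, h1, h2] <;> try ring

/-- The normalizer of the nonsplit Cartan subgroup:
matrices `[[a, bε], [b, a]]` together with matrices `[[a, bε], [-b, -a]]`. -/
def Nns (p : ℕ) (ε : ZMod p) : Subgroup (GL2 p) where
  carrier := { g | ((g : Matrix (Fin 2) (Fin 2) (ZMod p)) 1 1 =
      (g : Matrix (Fin 2) (Fin 2) (ZMod p)) 0 0 ∧
      (g : Matrix (Fin 2) (Fin 2) (ZMod p)) 0 1 = ε * (g : Matrix (Fin 2) (Fin 2) (ZMod p)) 1 0) ∨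
      ((g : Matrix (Fin 2) (Fin 2) (ZMod p)) 1 1 =
      -(g : Matrix (Fin 2) (Fin 2) (ZMod p)) 0 0 ∧
      (g : Matrix (Fin 2) (Fin 2) (ZMod p)) 0 1 =
        -(ε * (g : Matrix (Fin 2) (Fin 2) (ZMod p)) 1 0)) }
  one_mem' := by simp
  mul_mem' := by
    rintro a b (⟨ha1, ha2⟩ | ⟨ha1, ha2⟩) (⟨hb1, hb2⟩ | ⟨hb1, hb2⟩)
    · refine Or.inl ⟨?_, ?_⟩ <;>
        simp [Units.val_mul, Matrix.mul_apply, Fin.sum_univ_two, ha1, ha2, hb1, hb2] <;>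
        try ring
    · refine Or.inr ⟨?_, ?_⟩ <;>
        simp [Units.val_mul, Matrix.mul_apply, Fin.sum_univ_two, ha1, ha2, hb1, hb2] <;>
        try ring
    · refine Or.inr ⟨?_, ?_⟩ <;>
        simp [Units.val_mul, Matrix.mul_apply, Fin.sum_univ_two, ha1, ha2, hb1, hb2] <;>
        try ring
    · refine Or.inl ⟨?_, ?_⟩ <;>
        simp [Units.val_mul, Matrix.mul_apply, Fin.sum_univ_two, ha1, ha2, hb1, hb2] <;>
        try ring
  inv_mem' := by
    intro a h
    have hh : ((a⁻¹ : GL2 p) : Matrix (Fin 2) (Fin 2) (ZMod p))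
        = Ring.inverse ((a : Matrix (Fin 2) (Fin 2) (ZMod p)).det) •
          Matrix.adjugate (a : Matrix (Fin 2) (Fin 2) (ZMod p)) := by
      rw [Matrix.coe_units_inv, Matrix.inv_def]
    rcases h with ⟨h1, h2⟩ | ⟨h1, h2⟩
    · refine Or.inl ⟨?_, ?_⟩ <;> simp [hh, Matrix.adjugate_fin_two, h1, h2] <;> try ring
    · refine Or.inr ⟨?_, ?_⟩ <;> simp [hh, Matrix.adjugate_fin_two, h1, h2] <;> try ring
/-- The matrix `γ = [[1,1],[0,1]]` as an element of `GL₂(𝔽_p)`. -/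
def gam (p : ℕ) : GL2 p where
  val := !![1, 1; 0, 1]
  inv := !![1, -1; 0, 1]
  val_inv := by
    ext i j
    fin_cases i <;> fin_cases j <;>
      simp [Matrix.mul_apply, Fin.sum_univ_two, Matrix.one_apply]
  inv_val := by
    ext i j
    fin_cases i <;> fin_cases j <;>
      simp [Matrix.mul_apply, Fin.sum_univ_two, Matrix.one_apply]

/-- The diagonal matrix `diag(a, 1)` as an element of `GL₂(𝔽_p)`. -/
def dMat (p : ℕ) (a : (ZMod p)ˣ) : GL2 p where
  val := !![(a : ZMod p), 0; 0, 1]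
  inv := !![((a⁻¹ : (ZMod p)ˣ) : ZMod p), 0; 0, 1]
  val_inv := by
    ext i j
    fin_cases i <;> fin_cases j <;>
      simp [Matrix.mul_apply, Fin.sum_univ_two, Matrix.one_apply, ← Units.val_mul]
  inv_val := by
    ext i j
    fin_cases i <;> fin_cases j <;>
      simp [Matrix.mul_apply, Fin.sum_univ_two, Matrix.one_apply, ← Units.val_mul]

/-- `a ↦ diag(a, 1)` as a group homomorphism `𝔽_p^× → GL₂(𝔽_p)`. -/
def dHom (p : ℕ) : (ZMod p)ˣ →* GL2 p where
  toFun := dMat p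
  map_one' := by
    refine Units.ext ?_
    simp only [dMat]
    ext i j
    fin_cases i <;> fin_cases j <;> simp [Matrix.one_apply]
  map_mul' := by
    intro a b
    refine Units.ext ?_
    simp only [dMat, Units.val_mul]
    ext i j
    fin_cases i <;> fin_cases j <;> simp [Matrix.mul_apply, Fin.sum_univ_two]

/-- The semi-Cartan power subgroup `D^k = { diag(a^k, 1) : a ∈ 𝔽_p^× }`. -/
def Dpow (p k : ℕ) : Subgroup (GL2 p) :=
  ((dHom p).comp (powMonoidHom k)).range

/-- The diagonal matrix `diag(1, a)` as an element of `GL₂(𝔽_p)`. -/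
def dMatF (p : ℕ) (a : (ZMod p)ˣ) : GL2 p where
  val := !![1, 0; 0, (a : ZMod p)]
  inv := !![1, 0; 0, ((a⁻¹ : (ZMod p)ˣ) : ZMod p)]
  val_inv := by
    ext i j
    fin_cases i <;> fin_cases j <;>
      simp [Matrix.mul_apply, Fin.sum_univ_two, Matrix.one_apply, ← Units.val_mul]
  inv_val := by
    ext i j
    fin_cases i <;> fin_cases j <;>
      simp [Matrix.mul_apply, Fin.sum_univ_two, Matrix.one_apply, ← Units.val_mul]

/-- `a ↦ diag(1, a)` as a group homomorphism `𝔽_p^× → GL₂(𝔽_p)`. -/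
def dHomF (p : ℕ) : (ZMod p)ˣ →* GL2 p where
  toFun := dMatF p
  map_one' := by
    refine Units.ext ?_
    simp only [dMatF]
    ext i j
    fin_cases i <;> fin_cases j <;> simp [Matrix.one_apply]
  map_mul' := by
    intro a b
    refine Units.ext ?_
    simp only [dMatF, Units.val_mul]
    ext i j
    fin_cases i <;> fin_cases j <;> simp [Matrix.mul_apply, Fin.sum_univ_two]

/-- The flip `(D^k)_f = { diag(1, a^k) : a ∈ 𝔽_p^× }` of the semi-Cartan power subgroup. -/
def DpowF (p k : ℕ) : Subgroup (GL2 p) :=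
  ((dHomF p).comp (powMonoidHom k)).range

/-- Any two elements of the nonsplit Cartan subgroup commute. -/
lemma cns_comm {p : ℕ} {ε : ZMod p} {a b : GL2 p} (ha : a ∈ Cns p ε) (hb : b ∈ Cns p ε) :
    a * b = b * a := by
  obtain ⟨ha1, ha2⟩ := ha
  obtain ⟨hb1, hb2⟩ := hb
  refine Units.ext ?_
  ext i j
  fin_cases i <;> fin_cases j <;>
    · simp only [Units.val_mul]
      simp [Matrix.mul_apply, Fin.sum_univ_two, ha1, ha2, hb1, hb2]
      ring

/-- The subgroup `C_ns(p)^k` of `k`-th powers of elements of the nonsplit Cartan subgroup. -/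
def CnsPow (p : ℕ) (ε : ZMod p) (k : ℕ) : Subgroup (GL2 p) where
  carrier := { g | ∃ x ∈ Cns p ε, x ^ k = g }
  one_mem' := ⟨1, (Cns p ε).one_mem, one_pow k⟩
  mul_mem' := by
    rintro a b ⟨x, hx, rfl⟩ ⟨y, hy, rfl⟩
    exact ⟨x * y, (Cns p ε).mul_mem hx hy,
      Commute.mul_pow (cns_comm hx hy) k⟩
  inv_mem' := by
    rintro a ⟨x, hx, rfl⟩
    exact ⟨x⁻¹, (Cns p ε).inv_mem hx, by rw [inv_pow]⟩

/-- The conjugate subgroup `m H m⁻¹`. -/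
def conjSub {p : ℕ} (m : GL2 p) (H : Subgroup (GL2 p)) : Subgroup (GL2 p) :=
  Subgroup.map (MulAut.conj m).toMonoidHom H

section Aux
open Polynomial


def cnsSubring (p : ℕ) (ε : ZMod p) : Subring (Matrix (Fin 2) (Fin 2) (ZMod p)) where
  carrier := { M | M 1 1 = M 0 0 ∧ M 0 1 = ε * M 1 0 }
  one_mem' := by simp [Matrix.one_apply]
  zero_mem' := by simp
  add_mem' := by
    rintro a b ⟨ha1, ha2⟩ ⟨hb1, hb2⟩
    constructor <;> (simp [ha1, ha2, hb1, hb2]; try ring)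
  neg_mem' := by
    rintro a ⟨h1, h2⟩
    constructor <;> simp [h1, h2]
  mul_mem' := by
    rintro a b ⟨ha1, ha2⟩ ⟨hb1, hb2⟩
    constructor <;>
      (simp [Matrix.mul_apply, Fin.sum_univ_two, ha1, ha2, hb1, hb2]; ring)

lemma cnsSubring_comm {p : ℕ} {ε : ZMod p} (x y : cnsSubring p ε) : x * y = y * x := by
  obtain ⟨a, ha1, ha2⟩ := x
  obtain ⟨b, hb1, hb2⟩ := y
  ext i j
  show (a * b) i j = (b * a) i j
  fin_cases i <;> fin_cases j <;>
    · simp [Matrix.mul_apply, Fin.sum_univ_two, ha1, ha2, hb1, hb2]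
      ring

noncomputable instance (p : ℕ) (ε : ZMod p) : CommRing (cnsSubring p ε) :=
  { (inferInstance : Ring (cnsSubring p ε)) with mul_comm := cnsSubring_comm }

def scalarHom (p : ℕ) (ε : ZMod p) : ZMod p →+* cnsSubring p ε :=
  RingHom.codRestrict (algebraMap (ZMod p) (Matrix (Fin 2) (Fin 2) (ZMod p)))
    (cnsSubring p ε) (fun a => by constructor <;> simp [Matrix.algebraMap_eq_diagonal])

def Jelt (p : ℕ) (ε : ZMod p) : cnsSubring p ε :=
  ⟨!![0, ε; 1, 0], by constructor <;> simp⟩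

lemma Jroot (p : ℕ) (ε : ZMod p) :
    eval₂ (scalarHom p ε) (Jelt p ε) (X ^ 2 - C ε) = 0 := by
  have : Jelt p ε ^ 2 = scalarHom p ε ε := by
    apply Subtype.ext
    show ((Jelt p ε : Matrix (Fin 2) (Fin 2) (ZMod p)) ^ 2) = _
    have : (scalarHom p ε ε : Matrix (Fin 2) (Fin 2) (ZMod p))
        = algebraMap (ZMod p) (Matrix (Fin 2) (Fin 2) (ZMod p)) ε := rfl
    rw [this, pow_two]
    ext i j
    fin_cases i <;> fin_cases j <;>
      simp [Jelt, Matrix.mul_apply, Fin.sum_univ_two, Matrix.algebraMap_eq_diagonal]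
  simp [eval₂_sub, eval₂_pow, this]

lemma cns_pow_elt (p : ℕ) [Fact p.Prime] (ε : ZMod p) (hε : ∀ x : ZMod p, x ^ 2 ≠ ε)
    (k : ℕ) (hk1 : 1 ≤ k) (hkp : k < p + 1) :
    ∃ x : GL2 p,
      ((x : Matrix (Fin 2) (Fin 2) (ZMod p)) 1 1 = (x : Matrix (Fin 2) (Fin 2) (ZMod p)) 0 0 ∧
       (x : Matrix (Fin 2) (Fin 2) (ZMod p)) 0 1 =
         ε * (x : Matrix (Fin 2) (Fin 2) (ZMod p)) 1 0) ∧
      Matrix.det ((x ^ k : GL2 p) : Matrix (Fin 2) (Fin 2) (ZMod p)) = 1 ∧ x ^ k ≠ 1 := by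
  haveI : Fact (Irreducible (X ^ 2 - C ε)) :=
    ⟨X_pow_sub_C_irreducible_of_prime Nat.prime_two hε⟩
  set R := AdjoinRoot (X ^ 2 - C ε) with hR
  have hf0 : (X ^ 2 - C ε) ≠ 0 := (monic_X_pow_sub_C ε (by norm_num)).ne_zero
  haveI : Module.Finite (ZMod p) R := (AdjoinRoot.powerBasis hf0).finite
  haveI : Finite R := Module.finite_of_finite (ZMod p)
  haveI : Fintype R := Fintype.ofFinite R
  haveI : DecidableEq R := Classical.decEq R
  have hcardR : Fintype.card R = p ^ 2 := by
    rw [Module.card_eq_pow_finrank (K := ZMod p), ZMod.card,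
      AdjoinRoot.powerBasis hf0 |>.finrank]
    congr 1
    simp [AdjoinRoot.powerBasis, natDegree_X_pow_sub_C]
  have hcardU : Fintype.card Rˣ = p ^ 2 - 1 := by
    rw [Fintype.card_units, hcardR]
  obtain ⟨g, hg⟩ := IsCyclic.exists_generator (α := Rˣ)
  have horder : orderOf g = p ^ 2 - 1 := by
    rw [orderOf_eq_card_of_forall_mem_zpowers hg, Nat.card_eq_fintype_card, hcardU]
  set φ := AdjoinRoot.lift (scalarHom p ε) (Jelt p ε) (Jroot p ε) with hφ
  set ψ := ((cnsSubring p ε).subtype.comp φ) with hψdef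
  have hψinj : Function.Injective ψ := ψ.injective
  set x : GL2 p := Units.map ψ.toMonoidHom (g ^ (p - 1)) with hx
  have hval : ∀ n : ℕ, ((x ^ n : GL2 p) : Matrix (Fin 2) (Fin 2) (ZMod p))
      = ψ (((g : R)) ^ ((p - 1) * n)) := by
    intro n
    rw [hx, ← map_pow]
    show (ψ (((g ^ (p - 1) : Rˣ) : R) ^ n)) = _
    rw [← Units.val_pow_eq_pow_val, ← pow_mul]
    rfl
  have hp1 : 1 ≤ p := (Fact.out : p.Prime).one_lt.le
  refine ⟨x, ?_, ?_, ?_⟩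
  · have hmem := (φ (((g : R)) ^ (p - 1))).2
    have : (x : Matrix (Fin 2) (Fin 2) (ZMod p)) = ψ (((g : R)) ^ (p - 1)) := by
      have := hval 1
      simpa using this
    rw [this]
    exact ⟨hmem.1, hmem.2⟩
  · rw [hval k, map_pow, Matrix.det_pow]
    have hunit : IsUnit (Matrix.det (ψ (g : R))) := by
      have : IsUnit (ψ (g : R)) := (Units.map ψ.toMonoidHom g).isUnit
      exact (Matrix.isUnit_iff_isUnit_det _).mp this
    have hne : Matrix.det (ψ (g : R)) ≠ 0 := hunit.ne_zero
    rw [pow_mul, ZMod.pow_card_sub_one_eq_one hne, one_pow]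
  · intro hxk
    have : (g : R) ^ ((p - 1) * k) = 1 := by
      have h1 : ((x ^ k : GL2 p) : Matrix (Fin 2) (Fin 2) (ZMod p)) = 1 := by rw [hxk]; rfl
      have := hval k
      rw [h1] at this
      exact hψinj (by rw [← this]; exact (_root_.map_one ψ).symm)
    have hgu : g ^ ((p - 1) * k) = 1 := Units.ext (by push_cast [this]; rfl)
    have hdvd := orderOf_dvd_of_pow_eq_one hgu
    rw [horder] at hdvd
    have hlt : (p - 1) * k < p ^ 2 - 1 := by
      have hp2 : 1 < p := (Fact.out : p.Prime).one_lt
      have h2 : (p - 1) * (p + 1) = p ^ 2 - 1 := by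
        have h1 : 1 ≤ p ^ 2 := Nat.one_le_pow _ _ (by omega)
        zify [hp1, h1]
        ring
      rw [← h2]
      exact (mul_lt_mul_iff_right₀ (show 0 < p - 1 by omega)).mpr hkp
    have hpos : 0 < (p - 1) * k := by
      have : 1 < p := (Fact.out : p.Prime).one_lt
      exact Nat.mul_pos (by omega) hk1
    exact absurd (Nat.le_of_dvd hpos hdvd) (by omega)

end Aux

theorem stmt0 (p : ℕ) [Fact p.Prime] (hp3 : 3 < p)
    (e e₀ : ℕ) (he : e ∈ ({1, 2, 3, 4, 6} : Set ℕ)) (he₀ : 1 ≤ e₀)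
    (ε : ZMod p) (hε : ∀ x : ZMod p, x ^ 2 ≠ ε)
    (G : Subgroup (GL2 p)) (hG : G ⊓ SL2sub p = ⊥)
    (hconj : (∃ m : GL2 p, conjSub m (Dpow p (e * e₀)) ≤ G) ∨
      (∃ m : GL2 p, conjSub m (CnsPow p ε (e * e₀)) ≤ G))
    (hp : 12 * e₀ + 1 < p) :
    ∃ m : GL2 p, Dpow p (e * e₀) ≤ conjSub m G ∧ conjSub m G ≤ Cs p := by
  classical
  have he' : e = 1 ∨ e = 2 ∨ e = 3 ∨ e = 4 ∨ e = 6 := by simpa using he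
  set k := e * e₀ with hkdef
  have hk6 : k ≤ 6 * e₀ := by
    rcases he' with rfl | rfl | rfl | rfl | rfl <;> omega
  have hk1 : 1 ≤ k := by
    rcases he' with rfl | rfl | rfl | rfl | rfl <;> omega
  have hkp : k < p - 1 := by omega
  -- G is abelian, since det is injective on G
  have habel : ∀ g₁ ∈ G, ∀ g₂ ∈ G, g₁ * g₂ = g₂ * g₁ := by
    intro g₁ h₁ g₂ h₂
    have hdet : (g₁ * g₂) * (g₂ * g₁)⁻¹ ∈ SL2sub p := by
      show Matrix.GeneralLinearGroup.det ((g₁ * g₂) * (g₂ * g₁)⁻¹) = 1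
      rw [_root_.map_mul, _root_.map_inv, _root_.map_mul, _root_.map_mul]
      rw [mul_comm (Matrix.GeneralLinearGroup.det g₁)]
      exact mul_inv_cancel _
    have hmem : (g₁ * g₂) * (g₂ * g₁)⁻¹ ∈ G ⊓ SL2sub p :=
      ⟨G.mul_mem (G.mul_mem h₁ h₂) (G.inv_mem (G.mul_mem h₂ h₁)), hdet⟩
    rw [hG, Subgroup.mem_bot] at hmem
    exact mul_inv_eq_one.mp hmem
  rcases hconj with ⟨m, hm⟩ | ⟨m, hm⟩
  · -- split case
    obtain ⟨a, ha⟩ := IsCyclic.exists_generator (α := (ZMod p)ˣ)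
    have horder : orderOf a = p - 1 := by
      rw [orderOf_eq_card_of_forall_mem_zpowers ha, Nat.card_eq_fintype_card, ZMod.card_units]
    set α : ZMod p := ((a ^ k : (ZMod p)ˣ) : ZMod p) with hα
    have hα1 : α ≠ 1 := by
      intro h
      have h1 : a ^ k = 1 := Units.ext (by rw [← hα, h]; rfl)
      have := orderOf_dvd_of_pow_eq_one h1
      rw [horder] at this
      have := Nat.le_of_dvd (by omega) this
      omega
    have hdD : dHom p (a ^ k) ∈ Dpow p k := ⟨a, rfl⟩
    have hhG : m * dHom p (a ^ k) * m⁻¹ ∈ G := by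
      apply hm
      exact ⟨dHom p (a ^ k), hdD, rfl⟩
    refine ⟨m⁻¹, ?_, ?_⟩
    · intro d hd
      refine ⟨m * d * m⁻¹, hm ⟨d, hd, rfl⟩, ?_⟩
      show m⁻¹ * (m * d * m⁻¹) * m⁻¹⁻¹ = d
      group
    · rintro y ⟨g, hg, rfl⟩
      show (MulAut.conj m⁻¹ g : GL2 p) ∈ Cs p
      have hyval : (MulAut.conj m⁻¹ g : GL2 p) = m⁻¹ * g * m := by
        simp [MulAut.conj_apply]
      rw [hyval]
      have hcomm := habel g hg _ hhG
      have hc : (m⁻¹ * g * m) * dHom p (a ^ k) = dHom p (a ^ k) * (m⁻¹ * g * m) := by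
        have h2 : m⁻¹ * (g * (m * dHom p (a ^ k) * m⁻¹)) * m
            = m⁻¹ * ((m * dHom p (a ^ k) * m⁻¹) * g) * m := by rw [hcomm]
        group at h2 ⊢
        exact h2
      set A := ((m⁻¹ * g * m : GL2 p) : Matrix (Fin 2) (Fin 2) (ZMod p)) with hA
      have key : A * !![α, 0; 0, 1] = !![α, 0; 0, 1] * A := by
        have h3 := congrArg (Units.val) hc
        rw [Units.val_mul, Units.val_mul] at h3
        exact h3
      have h01 : A 0 1 = α * A 0 1 := by
        have := congrFun (congrFun key 0) 1
        simpa [Matrix.mul_apply, Fin.sum_univ_two] using this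
      have h10 : A 1 0 * α = A 1 0 := by
        have := congrFun (congrFun key 1) 0
        simpa [Matrix.mul_apply, Fin.sum_univ_two] using this
      constructor
      · have hz : (1 - α) * A 0 1 = 0 := by linear_combination h01
        rcases mul_eq_zero.mp hz with h | h
        · exact absurd (by linear_combination -h) hα1
        · exact h
      · have hz : (1 - α) * A 1 0 = 0 := by linear_combination -h10
        rcases mul_eq_zero.mp hz with h | h
        · exact absurd (by linear_combination -h) hα1
        · exact h
  · -- nonsplit case: contradiction
    exfalso
    obtain ⟨x, hxC, hxdet, hxne⟩ := cns_pow_elt p ε hε k hk1 (by omega)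
    have hy : x ^ k ∈ CnsPow p ε k := ⟨x, hxC, rfl⟩
    have hyG : m * x ^ k * m⁻¹ ∈ G := hm ⟨x ^ k, hy, rfl⟩
    have hySL : m * x ^ k * m⁻¹ ∈ SL2sub p := by
      show Matrix.GeneralLinearGroup.det (m * x ^ k * m⁻¹) = 1
      rw [_root_.map_mul, _root_.map_mul, _root_.map_inv,
        mul_comm (Matrix.GeneralLinearGroup.det m)]
      rw [mul_assoc, mul_inv_cancel, mul_one]
      apply Units.ext
      exact hxdet
    have h1 : m * x ^ k * m⁻¹ = 1 := by
      have hmem2 : m * x ^ k * m⁻¹ ∈ G ⊓ SL2sub p := ⟨hyG, hySL⟩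
      rw [hG, Subgroup.mem_bot] at hmem2
      exact hmem2
    apply hxne
    have := congrArg (fun z => m⁻¹ * z * m) h1
    simpa [mul_assoc] using this
end

section
/- Let p be an odd prime, let k ≥ 1 be an integer, and let G be an abelian subgroup of GL₂(𝔽_p). Suppose that some GL₂(𝔽_p)-conjugate of D^k or some GL₂(𝔽_p)-conjugate of C_ns(p)^k is contained in G. If p > 2k + 1, then G is conjugate in GL₂(𝔽_p) to a subgroup of C_s(p) or to a subgroup of C_ns(p). -/
open Matrix

/-!
Both cases rest on the same observation: if an abelian group `G` contains `m h m⁻¹`, then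
`m⁻¹ G m` lies in the centralizer of `h`. So it suffices to find in `D^k` (resp. `C_ns(p)^k`)
an element whose centralizer is contained in `C_s(p)` (resp. `C_ns(p)`); any nonscalar element
of either Cartan subgroup does. For `D^k`, take `diag(a^k, 1)` with `a` a generator of `𝔽_p^×`,
which is nonscalar as `k < p - 1`. For `C_ns(p)^k`, embed `𝔽_{p²}^×` into `C_ns(p)` by the
regular representation of `𝔽_{p²} = 𝔽_p(√ε)`: if `g` generates `𝔽_{p²}^×` and `g^k` were in
`𝔽_p`, then `p² - 1 ∣ k (p - 1)`, i.e. `p + 1 ∣ k`, impossible as `k < p + 1`.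
-/

open Polynomial

section CartanShape

variable {R : Type*} [CommRing R]

/-- The shape `[[a, ε b], [b, a]]` of the elements of the nonsplit Cartan subgroup `Cns`. -/
def IsCnsShape (ε : R) (A : Matrix (Fin 2) (Fin 2) R) : Prop :=
  A 1 1 = A 0 0 ∧ A 0 1 = ε * A 1 0

lemma IsCnsShape.of_commute [NoZeroDivisors R] {ε : R} (hε : ε ≠ 0)
    {A B : Matrix (Fin 2) (Fin 2) R} (hA : IsCnsShape ε A) (hA10 : A 1 0 ≠ 0)
    (hAB : Commute A B) : IsCnsShape ε B := by
  obtain ⟨hA11, hA01⟩ := hA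
  have h00 := congrFun (congrFun hAB.eq 0) 0
  have h01 := congrFun (congrFun hAB.eq 0) 1
  simp only [Matrix.mul_apply, Fin.sum_univ_two, hA11, hA01] at h00 h01
  constructor
  · have : (ε * A 1 0) * (B 1 1 - B 0 0) = 0 := by linear_combination h01
    exact sub_eq_zero.mp ((mul_eq_zero.mp this).resolve_left (mul_ne_zero hε hA10))
  · have : A 1 0 * (B 0 1 - ε * B 1 0) = 0 := by linear_combination -h00
    exact sub_eq_zero.mp ((mul_eq_zero.mp this).resolve_left hA10)

lemma IsCnsShape.eq_algebraMap {ε : R} {A : Matrix (Fin 2) (Fin 2) R} (hA : IsCnsShape ε A)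
    (hA10 : A 1 0 = 0) : A = algebraMap R _ (A 0 0) := by
  ext i j
  fin_cases i <;> fin_cases j <;> simp [Matrix.algebraMap_matrix_apply, hA.1, hA.2, hA10]

/-- The matrix of multiplication by `√ε` in the basis `1, √ε`. -/
def sqrtMatrix (ε : R) : Matrix (Fin 2) (Fin 2) R := !![0, ε; 1, 0]

noncomputable def adjoinRootSqrtToMatrix (ε : R) :
    AdjoinRoot (X ^ 2 - C ε) →ₐ[R] Matrix (Fin 2) (Fin 2) R :=
  Ideal.Quotient.liftₐ (Ideal.span {X ^ 2 - C ε}) (aeval (sqrtMatrix ε)) fun q hq => by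
    obtain ⟨r, rfl⟩ := Ideal.mem_span_singleton'.mp hq
    have : sqrtMatrix ε ^ 2 = algebraMap R _ ε := by
      ext i j
      fin_cases i <;> fin_cases j <;> simp [sqrtMatrix, sq, Matrix.algebraMap_matrix_apply]
    simp [this]

lemma adjoinRootSqrtToMatrix_root (ε : R) :
    adjoinRootSqrtToMatrix ε (AdjoinRoot.root _) = sqrtMatrix ε :=
  (Ideal.Quotient.lift_mk _ _ _).trans (aeval_X _)

/-- Every `φ z` commutes with `φ √ε = sqrtMatrix ε`, whose centralizer consists of the matrices
of shape `IsCnsShape ε`. -/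
lemma isCnsShape_adjoinRootSqrtToMatrix [IsDomain R] {ε : R} (hε : ε ≠ 0)
    (z : AdjoinRoot (X ^ 2 - C ε)) : IsCnsShape ε (adjoinRootSqrtToMatrix ε z) := by
  refine IsCnsShape.of_commute hε (A := sqrtMatrix ε) (by simp [IsCnsShape, sqrtMatrix])
    (by simp [sqrtMatrix]) ?_
  rw [← adjoinRootSqrtToMatrix_root]
  exact (Commute.all _ z).map _

end CartanShape

lemma exists_units_pow_notMem_range_algebraMap {F L : Type*} [Field F] [Finite F] [Field L]
    [Algebra F L] [Module.Finite F L] (hL : Module.finrank F L = 2) {k : ℕ} (hk0 : k ≠ 0)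
    (hk : k < Nat.card F + 1) : ∃ g : Lˣ, ((g ^ k : Lˣ) : L) ∉ Set.range (algebraMap F L) := by
  have : Finite L := Module.finite_of_finite F
  set q := Nat.card F
  have hq : 1 < q := Finite.one_lt_card
  obtain ⟨g, hg⟩ := IsCyclic.exists_ofOrder_eq_natCard (α := Lˣ)
  refine ⟨g, fun ⟨c, hc⟩ => ?_⟩
  have hc0 : c ≠ 0 := by
    rintro rfl
    exact (g ^ k).ne_zero (by simpa using hc.symm)
  have hcq : c ^ (q - 1) = 1 := by
    simpa [Nat.card_units] using
      congrArg Units.val (pow_card_eq_one' (G := Fˣ) (x := Units.mk0 c hc0))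
  have hgk : g ^ (k * (q - 1)) = 1 := by
    ext
    simp [pow_mul, ← hc, ← map_pow, hcq]
  have hdvd : (q + 1) * (q - 1) ∣ k * (q - 1) := by
    rw [← Nat.sq_sub_sq, one_pow, ← hL, ← Module.natCard_eq_pow_finrank, ← Nat.card_units, ← hg]
    exact orderOf_dvd_of_pow_eq_one hgk
  have := Nat.le_of_dvd (by omega) (Nat.dvd_of_mul_dvd_mul_right (by omega) hdvd)
  omega

section GL2

variable {p : ℕ}

lemma centralizer_dMat_le_Cs [Fact p.Prime] {u : (ZMod p)ˣ} (hu : u ≠ 1) :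
    Subgroup.centralizer {dMat p u} ≤ Cs p := by
  intro b hb
  have h := congrArg Units.val (Subgroup.mem_centralizer_singleton_iff.mp hb)
  have hd : (dMat p u : Matrix (Fin 2) (Fin 2) (ZMod p)) = !![(u : ZMod p), 0; 0, 1] := rfl
  set B := (b : Matrix (Fin 2) (Fin 2) (ZMod p))
  have h01 : B 0 1 = u * B 0 1 := by
    simpa [hd, Matrix.mul_apply, Fin.sum_univ_two] using congrFun (congrFun h 0) 1
  have h10 : B 1 0 * u = B 1 0 := by
    simpa [hd, Matrix.mul_apply, Fin.sum_univ_two] using congrFun (congrFun h 1) 0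
  have hu' : (u : ZMod p) - 1 ≠ 0 := sub_ne_zero.mpr (Units.val_eq_one.not.mpr hu)
  constructor
  · have : B 0 1 * ((u : ZMod p) - 1) = 0 := by linear_combination -h01
    exact (mul_eq_zero.mp this).resolve_right hu'
  · have : B 1 0 * ((u : ZMod p) - 1) = 0 := by linear_combination h10
    exact (mul_eq_zero.mp this).resolve_right hu'

lemma centralizer_le_Cns [Fact p.Prime] {ε : ZMod p} (hε : ε ≠ 0) {x : GL2 p}
    (hx : x ∈ Cns p ε) (hx10 : (x : Matrix (Fin 2) (Fin 2) (ZMod p)) 1 0 ≠ 0) :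
    Subgroup.centralizer {x} ≤ Cns p ε := fun _ hb =>
  IsCnsShape.of_commute hε hx hx10
    (congrArg Units.val (Subgroup.mem_centralizer_singleton_iff.mp hb)).symm

lemma CnsPow_le_Cns (ε : ZMod p) (k : ℕ) : CnsPow p ε k ≤ Cns p ε := by
  rintro _ ⟨x, hx, rfl⟩
  exact pow_mem hx k

lemma exists_ne_one_dMat_mem_Dpow [Fact p.Prime] {k : ℕ} (hk0 : k ≠ 0) (hk : k < p - 1) :
    ∃ u ≠ 1, dMat p u ∈ Dpow p k := by
  obtain ⟨a, ha⟩ := IsCyclic.exists_ofOrder_eq_natCard (α := (ZMod p)ˣ)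
  rw [Nat.card_eq_fintype_card, ZMod.card_units] at ha
  exact ⟨a ^ k, pow_ne_one_of_lt_orderOf hk0 (ha ▸ hk), a, rfl⟩

lemma exists_mem_CnsPow_apply_one_zero_ne_zero [Fact p.Prime] {ε : ZMod p}
    (hε : ∀ x : ZMod p, x ^ 2 ≠ ε) {k : ℕ} (hk0 : k ≠ 0) (hk : k < p + 1) :
    ∃ y ∈ CnsPow p ε k, (y : Matrix (Fin 2) (Fin 2) (ZMod p)) 1 0 ≠ 0 := by
  have hε0 : ε ≠ 0 := fun h => hε 0 (by simp [h])
  have hirr : Irreducible (X ^ 2 - C ε) := X_pow_sub_C_irreducible_of_prime Nat.prime_two hε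
  have : Fact (Irreducible (X ^ 2 - C ε)) := ⟨hirr⟩
  let pb := AdjoinRoot.powerBasis hirr.ne_zero
  have : Module.Finite (ZMod p) (AdjoinRoot (X ^ 2 - C ε)) := pb.finite
  have hrank : Module.finrank (ZMod p) (AdjoinRoot (X ^ 2 - C ε)) = 2 := by
    rw [pb.finrank, AdjoinRoot.powerBasis_dim, natDegree_X_pow_sub_C]
  obtain ⟨g, hg⟩ := exists_units_pow_notMem_range_algebraMap hrank hk0 (by rwa [Nat.card_zmod])
  set φ := adjoinRootSqrtToMatrix ε
  let x : GL2 p := Units.map φ g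
  have hxk : ((x ^ k : GL2 p) : Matrix (Fin 2) (Fin 2) (ZMod p)) = φ ↑(g ^ k) :=
    congrArg Units.val (map_pow _ g k).symm
  refine ⟨x ^ k, ⟨x, isCnsShape_adjoinRootSqrtToMatrix hε0 g, rfl⟩, fun h10 => hg ?_⟩
  rw [hxk] at h10
  refine ⟨φ ↑(g ^ k) 0 0, φ.toRingHom.injective ?_⟩
  change φ _ = φ _
  rw [AlgHom.commutes]
  exact ((isCnsShape_adjoinRootSqrtToMatrix hε0 _).eq_algebraMap h10).symm

end GL2

lemma conjSub_inv_le_of_centralizer_le {p : ℕ} {G C : Subgroup (GL2 p)}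
    (hG : ∀ a ∈ G, ∀ b ∈ G, a * b = b * a) {m h : GL2 p} (hh : m * h * m⁻¹ ∈ G)
    (hC : Subgroup.centralizer {h} ≤ C) : conjSub m⁻¹ G ≤ C := by
  rintro _ ⟨b, hb, rfl⟩
  apply hC
  rw [Subgroup.mem_centralizer_singleton_iff]
  change m⁻¹ * b * m⁻¹⁻¹ * h = h * (m⁻¹ * b * m⁻¹⁻¹)
  simpa [mul_assoc] using congrArg (fun x => m⁻¹ * x * m) (hG b hb _ hh)

theorem stmt1_general (p : ℕ) [Fact p.Prime]
    (k : ℕ) (hk : 1 ≤ k)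
    (ε : ZMod p) (hε : ∀ x : ZMod p, x ^ 2 ≠ ε)
    (G : Subgroup (GL2 p)) (hab : ∀ a ∈ G, ∀ b ∈ G, a * b = b * a)
    (hconj : (∃ m : GL2 p, conjSub m (Dpow p k) ≤ G) ∨
      (∃ m : GL2 p, conjSub m (CnsPow p ε k) ≤ G))
    (hp : 2 * k + 1 < p) :
    (∃ m : GL2 p, conjSub m G ≤ Cs p) ∨ (∃ m : GL2 p, conjSub m G ≤ Cns p ε) := by
  rcases hconj with ⟨m, hm⟩ | ⟨m, hm⟩
  · obtain ⟨u, hu, huD⟩ := exists_ne_one_dMat_mem_Dpow (p := p) (k := k) (by omega) (by omega)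
    exact Or.inl ⟨m⁻¹, conjSub_inv_le_of_centralizer_le hab (hm ⟨_, huD, rfl⟩)
      (centralizer_dMat_le_Cs hu)⟩
  · have hε0 : ε ≠ 0 := fun h => hε 0 (by simp [h])
    obtain ⟨y, hyP, hy10⟩ :=
      exists_mem_CnsPow_apply_one_zero_ne_zero (k := k) hε (by omega) (by omega)
    exact Or.inr ⟨m⁻¹, conjSub_inv_le_of_centralizer_le hab (hm ⟨y, hyP, rfl⟩)
      (centralizer_le_Cns hε0 (CnsPow_le_Cns ε k hyP) hy10)⟩

theorem stmt1 (p : ℕ) [Fact p.Prime] (hp2 : p ≠ 2)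
    (k : ℕ) (hk : 1 ≤ k)
    (ε : ZMod p) (hε : ∀ x : ZMod p, x ^ 2 ≠ ε)
    (G : Subgroup (GL2 p)) (hab : ∀ a ∈ G, ∀ b ∈ G, a * b = b * a)
    (hconj : (∃ m : GL2 p, conjSub m (Dpow p k) ≤ G) ∨
      (∃ m : GL2 p, conjSub m (CnsPow p ε k) ≤ G))
    (hp : 2 * k + 1 < p) :
    (∃ m : GL2 p, conjSub m G ≤ Cs p) ∨ (∃ m : GL2 p, conjSub m G ≤ Cns p ε) :=
  stmt1_general p k hk ε hε G hab hconj hp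
end

section
/- Let p be an odd prime and k ≥ 1 an integer. Let G be an abelian subgroup of GL₂(𝔽_p) containing an element of order p, and suppose that some GL₂(𝔽_p)-conjugate of D^k is contained in G. Then p − 1 divides k. -/
open Matrix

/-- Powers of a diagonal 2×2 matrix. -/
lemma diag_mat_pow {p : ℕ} (M : Matrix (Fin 2) (Fin 2) (ZMod p))
    (h01 : M 0 1 = 0) (h10 : M 1 0 = 0) (n : ℕ) :
    (M ^ n) 0 1 = 0 ∧ (M ^ n) 1 0 = 0 ∧
      (M ^ n) 0 0 = (M 0 0) ^ n ∧ (M ^ n) 1 1 = (M 1 1) ^ n := by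
  induction n with
  | zero => simp [Matrix.one_apply]
  | succ n ih =>
    obtain ⟨i1, i2, i3, i4⟩ := ih
    refine ⟨?_, ?_, ?_, ?_⟩ <;>
      simp [pow_succ, Matrix.mul_apply, Fin.sum_univ_two, i1, i2, i3, i4, h01, h10]

theorem stmt2 (p : ℕ) [Fact p.Prime] (hp2 : p ≠ 2)
    (k : ℕ) (hk : 1 ≤ k)
    (G : Subgroup (GL2 p)) (hab : ∀ a ∈ G, ∀ b ∈ G, a * b = b * a)
    (horder : ∃ g ∈ G, orderOf g = p)
    (hconj : ∃ m : GL2 p, conjSub m (Dpow p k) ≤ G) :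
    (p - 1) ∣ k := by
  have hp : p.Prime := Fact.out
  obtain ⟨g, hg, hord⟩ := horder
  obtain ⟨m, hm⟩ := hconj
  obtain ⟨a, ha⟩ := IsCyclic.exists_generator (α := (ZMod p)ˣ)
  have hcard : orderOf a = p - 1 := by
    rw [orderOf_eq_card_of_forall_mem_zpowers ha, Nat.card_eq_fintype_card,
      ZMod.card_units_eq_totient, Nat.totient_prime hp]
  rw [← hcard]
  apply orderOf_dvd_of_pow_eq_one
  by_contra hne
  -- the conjugated generator `u = m⁻¹ g m` commutes with `diag(a^k, 1)`
  set u : GL2 p := m⁻¹ * g * m with hu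
  set d : GL2 p := dHom p (a ^ k) with hd
  have hdG : (MulAut.conj m) d ∈ G := hm ⟨d, ⟨a, rfl⟩, rfl⟩
  have hcomm : (m * d * m⁻¹) * g = g * (m * d * m⁻¹) := by
    simpa [MulAut.conj_apply] using hab _ hdG g hg
  have hdu : d * u = u * d := by
    have h1 : d * u = m⁻¹ * ((m * d * m⁻¹) * g) * m := by rw [hu]; group
    have h2 : u * d = m⁻¹ * (g * (m * d * m⁻¹)) * m := by rw [hu]; group
    rw [h1, h2, hcomm]
  set c : ZMod p := ((a : ZMod p)) ^ k with hc
  have hdval : (d : Matrix (Fin 2) (Fin 2) (ZMod p)) = !![c, 0; 0, 1] := by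
    simp [hd, dHom, dMat, hc, Units.val_pow_eq_pow_val]
  have hcne : c ≠ 1 := by
    intro h
    apply hne
    ext
    simpa [Units.val_pow_eq_pow_val, hc] using h
  -- extract matrix entry equations from the commutation
  set U : Matrix (Fin 2) (Fin 2) (ZMod p) := (u : Matrix (Fin 2) (Fin 2) (ZMod p)) with hU
  have hmat : (d : Matrix (Fin 2) (Fin 2) (ZMod p)) * U
      = U * (d : Matrix (Fin 2) (Fin 2) (ZMod p)) := by
    have := congrArg (fun z : GL2 p => (z : Matrix (Fin 2) (Fin 2) (ZMod p))) hdu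
    simpa [Units.val_mul] using this
  have e01 : c * U 0 1 = U 0 1 := by
    have := congrFun (congrFun hmat 0) 1
    simpa [hdval, Matrix.mul_apply, Fin.sum_univ_two] using this
  have e10 : U 1 0 = U 1 0 * c := by
    have := congrFun (congrFun hmat 1) 0
    simpa [hdval, Matrix.mul_apply, Fin.sum_univ_two] using this
  have hsub : c - 1 ≠ 0 := sub_ne_zero.mpr hcne
  have h01 : U 0 1 = 0 := by
    have : (c - 1) * U 0 1 = 0 := by linear_combination e01
    rcases mul_eq_zero.mp this with h | h
    · exact absurd h hsub
    · exact h
  have h10 : U 1 0 = 0 := by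
    have : (c - 1) * U 1 0 = 0 := by linear_combination -e10
    rcases mul_eq_zero.mp this with h | h
    · exact absurd h hsub
    · exact h
  -- u has order dividing p, hence U^p = 1
  have hup : u ^ p = 1 := by
    have hgp : g ^ p = 1 := by
      have := pow_orderOf_eq_one g
      rwa [hord] at this
    have : u ^ p = m⁻¹ * g ^ p * m := by
      rw [hu]
      have h3 : m⁻¹ * g * m = m⁻¹ * g * (m⁻¹)⁻¹ := by rw [inv_inv]
      rw [h3, conj_pow, inv_inv]
    rw [this, hgp, mul_one, inv_mul_cancel]
  have hUp : U ^ p = 1 := by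
    have := congrArg (fun z : GL2 p => (z : Matrix (Fin 2) (Fin 2) (ZMod p))) hup
    simpa [hU, Units.val_pow_eq_pow_val] using this
  obtain ⟨-, -, q00, q11⟩ := diag_mat_pow U h01 h10 p
  rw [hUp] at q00 q11
  have h00 : U 0 0 = 1 := by
    have := q00.symm
    rwa [ZMod.pow_card, Matrix.one_apply_eq] at this
  have h11 : U 1 1 = 1 := by
    have := q11.symm
    rwa [ZMod.pow_card, Matrix.one_apply_eq] at this
  -- hence u = 1, so g = 1, contradicting that g has order p
  have huone : u = 1 := by
    refine Units.ext ?_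
    ext i j
    fin_cases i <;> fin_cases j <;>
      simp [← hU, h00, h01, h10, h11, Matrix.one_apply]
  have hgone : g = 1 := by
    have : m * u * m⁻¹ = g := by rw [hu]; group
    rw [huone] at this
    simpa using this.symm
  rw [hgone, orderOf_one] at hord
  exact hp.one_lt.ne hord
end

section
/- Let p be an odd prime and let G be an abelian subgroup of GL₂(𝔽_p). Then G is conjugate in GL₂(𝔽_p) to a subgroup of B₀(p), or to a subgroup of N_s(p), or to a subgroup of N_ns(p). -/
open Matrix

section Aux

variable {p : ℕ} [Fact p.Prime]

/-- Nonscalar predicate -/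
def NSc (M : Matrix (Fin 2) (Fin 2) (ZMod p)) : Prop :=
  ¬ (M 0 1 = 0 ∧ M 1 0 = 0 ∧ M 1 1 = M 0 0)

lemma conj_to_companion (g : GL2 p) (h : NSc (g : Matrix (Fin 2) (Fin 2) (ZMod p))) :
    ∃ m : GL2 p, ((m * g * m⁻¹ : GL2 p) : Matrix (Fin 2) (Fin 2) (ZMod p)) =
      !![0, -(g : Matrix (Fin 2) (Fin 2) (ZMod p)).det;
         1, (g : Matrix (Fin 2) (Fin 2) (ZMod p)) 0 0 + (g : Matrix (Fin 2) (Fin 2) (ZMod p)) 1 1] := by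
  set M : Matrix (Fin 2) (Fin 2) (ZMod p) := (g : Matrix (Fin 2) (Fin 2) (ZMod p)) with hM
  -- choose a cyclic vector
  have key : ∃ v : Fin 2 → ZMod p,
      v 0 * (M 1 0 * v 0 + M 1 1 * v 1) - v 1 * (M 0 0 * v 0 + M 0 1 * v 1) ≠ 0 := by
    unfold NSc at h
    by_cases h10 : M 1 0 ≠ 0
    · exact ⟨![1, 0], by simpa using h10⟩
    by_cases h01 : M 0 1 ≠ 0
    · exact ⟨![0, 1], by simpa using h01⟩
    push_neg at h10 h01
    refine ⟨![1, 1], ?_⟩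
    have : M 1 1 ≠ M 0 0 := fun hc => h ⟨h01, h10, hc⟩
    simp [h10, h01]
    intro hc
    exact this (by linear_combination hc)
  obtain ⟨v, hv⟩ := key
  set P : Matrix (Fin 2) (Fin 2) (ZMod p) :=
    !![v 0, M 0 0 * v 0 + M 0 1 * v 1; v 1, M 1 0 * v 0 + M 1 1 * v 1] with hP
  have hdet : P.det ≠ 0 := by
    rw [hP, Matrix.det_fin_two_of]; simpa using fun hc => hv (by linear_combination hc)
  set C : Matrix (Fin 2) (Fin 2) (ZMod p) := !![0, -M.det; 1, M 0 0 + M 1 1] with hC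
  have hMP : M * P = P * C := by
    ext i j
    fin_cases i <;> fin_cases j <;>
      simp [hP, hC, Matrix.mul_apply, Fin.sum_univ_two, Matrix.det_fin_two] <;> ring
  have hPu : IsUnit P := (Matrix.isUnit_iff_isUnit_det P).2 (isUnit_iff_ne_zero.2 hdet)
  refine ⟨hPu.unit⁻¹, ?_⟩
  have h1 : ((hPu.unit⁻¹ : GL2 p) : Matrix (Fin 2) (Fin 2) (ZMod p)) = P⁻¹ := by
    rw [Matrix.coe_units_inv, hPu.unit_spec]
  have h2 : (((hPu.unit⁻¹)⁻¹ : GL2 p) : Matrix (Fin 2) (Fin 2) (ZMod p)) = P := by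
    rw [inv_inv, hPu.unit_spec]
  show ((hPu.unit⁻¹ : GL2 p) : Matrix _ _ _) * M * (((hPu.unit⁻¹)⁻¹ : GL2 p) : Matrix _ _ _) = C
  rw [h1, h2, Matrix.mul_assoc, hMP, ← Matrix.mul_assoc,
    Matrix.nonsing_inv_mul P (isUnit_iff_ne_zero.2 hdet), Matrix.one_mul]


lemma conj_to_form (g : GL2 p) (hg : NSc (g : Matrix (Fin 2) (Fin 2) (ZMod p)))
    (N : Matrix (Fin 2) (Fin 2) (ZMod p)) (hN : NSc N)
    (htr : N 0 0 + N 1 1 = (g : Matrix (Fin 2) (Fin 2) (ZMod p)) 0 0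
      + (g : Matrix (Fin 2) (Fin 2) (ZMod p)) 1 1)
    (hdet : N.det = (g : Matrix (Fin 2) (Fin 2) (ZMod p)).det) :
    ∃ m : GL2 p, ((m * g * m⁻¹ : GL2 p) : Matrix (Fin 2) (Fin 2) (ZMod p)) = N := by
  have hNu : IsUnit N := (Matrix.isUnit_iff_isUnit_det N).2
    (hdet ▸ (Matrix.isUnit_iff_isUnit_det _).1 (Units.isUnit g))
  set n : GL2 p := hNu.unit with hn
  have hnv : (n : Matrix (Fin 2) (Fin 2) (ZMod p)) = N := hNu.unit_spec
  obtain ⟨m₁, hm₁⟩ := conj_to_companion g hg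
  obtain ⟨m₂, hm₂⟩ := conj_to_companion n (by rw [hnv]; exact hN)
  rw [hnv, hdet, htr] at hm₂
  have heq : m₁ * g * m₁⁻¹ = m₂ * n * m₂⁻¹ := Units.ext (hm₁.trans hm₂.symm)
  refine ⟨m₂⁻¹ * m₁, ?_⟩
  have : (m₂⁻¹ * m₁) * g * (m₂⁻¹ * m₁)⁻¹ = n := by
    rw [_root_.mul_inv_rev, inv_inv]
    calc m₂⁻¹ * m₁ * g * (m₁⁻¹ * m₂) = m₂⁻¹ * (m₁ * g * m₁⁻¹) * m₂ := by group
    _ = m₂⁻¹ * (m₂ * n * m₂⁻¹) * m₂ := by rw [heq]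
    _ = n := by group
  rw [this, hnv]

end Aux


lemma conjSub_le {p : ℕ} (m : GL2 p) (G S : Subgroup (GL2 p))
    (h : ∀ y ∈ G, m * y * m⁻¹ ∈ S) : conjSub m G ≤ S := by
  intro x hx
  obtain ⟨y, hy, rfl⟩ := Subgroup.mem_map.1 hx
  simpa using h y hy

theorem stmt4 (p : ℕ) [Fact p.Prime] (hp2 : p ≠ 2)
    (ε : ZMod p) (hε : ∀ x : ZMod p, x ^ 2 ≠ ε)
    (G : Subgroup (GL2 p)) (hab : ∀ a ∈ G, ∀ b ∈ G, a * b = b * a) :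
    (∃ m : GL2 p, conjSub m G ≤ B0 p) ∨ (∃ m : GL2 p, conjSub m G ≤ Ns p) ∨
      (∃ m : GL2 p, conjSub m G ≤ Nns p ε) := by
  have hp := (Fact.out : p.Prime)
  haveI : Nontrivial (ZMod p) := ZMod.nontrivial_iff.2 hp.one_lt.ne'
  have h2 : (2 : ZMod p) ≠ 0 := by
    intro h
    have : ((2:ℕ) : ZMod p) = 0 := by exact_mod_cast h
    rw [ZMod.natCast_eq_zero_iff] at this
    exact hp2 ((Nat.prime_dvd_prime_iff_eq hp Nat.prime_two).1 this)
  set half : ZMod p := (2 : ZMod p)⁻¹ with hhalf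
  have h2' : half * 2 = 1 := inv_mul_cancel₀ h2
  by_cases hex : ∃ g ∈ G, NSc (g : Matrix (Fin 2) (Fin 2) (ZMod p))
  · obtain ⟨g₀, hg₀G, hg₀⟩ := hex
    set M : Matrix (Fin 2) (Fin 2) (ZMod p) := (g₀ : Matrix (Fin 2) (Fin 2) (ZMod p)) with hMdef
    set t : ZMod p := M 0 0 + M 1 1 with ht
    set d : ZMod p := M.det with hd
    -- helper to transfer commutation
    have comm_key : ∀ (m : GL2 p) (N : Matrix (Fin 2) (Fin 2) (ZMod p)),
        ((m * g₀ * m⁻¹ : GL2 p) : Matrix (Fin 2) (Fin 2) (ZMod p)) = N →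
        ∀ y ∈ G, ((m * y * m⁻¹ : GL2 p) : Matrix (Fin 2) (Fin 2) (ZMod p)) * N
          = N * ((m * y * m⁻¹ : GL2 p) : Matrix (Fin 2) (Fin 2) (ZMod p)) := by
      intro m N hm y hy
      rw [← hm, ← Units.val_mul, ← Units.val_mul]
      congr 1
      have hc := hab y hy g₀ hg₀G
      calc (m * y * m⁻¹) * (m * g₀ * m⁻¹) = m * (y * g₀) * m⁻¹ := by group
        _ = m * (g₀ * y) * m⁻¹ := by rw [hc]
        _ = (m * g₀ * m⁻¹) * (m * y * m⁻¹) := by group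
    by_cases hΔ0 : t ^ 2 - 4 * d = 0
    · -- repeated eigenvalue: Borel case
      left
      obtain ⟨m, hm⟩ := conj_to_form g₀ hg₀ !![half * t, 1; 0, half * t]
        (by
          rintro ⟨hc, -, -⟩
          exact one_ne_zero hc)
        (by simp; linear_combination t * h2')
        (by
          rw [Matrix.det_fin_two_of]
          linear_combination (half * half) * hΔ0 + d * (2 * half + 1) * h2')
      refine ⟨m, conjSub_le m G (B0 p) ?_⟩
      intro y hy
      have hcomm := comm_key m _ hm y hy
      set Y : Matrix (Fin 2) (Fin 2) (ZMod p) := ((m * y * m⁻¹ : GL2 p) : Matrix (Fin 2) (Fin 2) (ZMod p)) with hY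
      have e00 := congrFun (congrFun hcomm 0) 0
      simp [Matrix.mul_apply, Fin.sum_univ_two] at e00
      show Y 1 0 = 0
      linear_combination -e00
    · by_cases hsq : IsSquare (t ^ 2 - 4 * d)
      · -- split case
        right; left
        obtain ⟨s, hs⟩ := hsq
        have hs0 : s ≠ 0 := by rintro rfl; simp at hs; exact hΔ0 hs
        obtain ⟨m, hm⟩ := conj_to_form g₀ hg₀ !![half * (t + s), 0; 0, half * (t - s)]
          (by
            rintro ⟨-, -, hc⟩
            have hc2 : half * (t - s) = half * (t + s) := hc
            apply hs0
            have h4 : (2 : ZMod p) * s = 0 := by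
              linear_combination (-2 : ZMod p) * hc2 - 2 * s * h2'
            exact (mul_eq_zero.1 h4).resolve_left h2)
          (by simp; linear_combination t * h2')
          (by
            rw [Matrix.det_fin_two_of]
            linear_combination (half * half) * hs + d * (2 * half + 1) * h2')
        refine ⟨m, conjSub_le m G (Ns p) ?_⟩
        intro y hy
        have hcomm := comm_key m _ hm y hy
        set Y : Matrix (Fin 2) (Fin 2) (ZMod p) := ((m * y * m⁻¹ : GL2 p) : Matrix (Fin 2) (Fin 2) (ZMod p)) with hY
        have e01 := congrFun (congrFun hcomm 0) 1
        have e10 := congrFun (congrFun hcomm 1) 0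
        simp [Matrix.mul_apply, Fin.sum_univ_two] at e01 e10
        refine Or.inl ⟨?_, ?_⟩
        · have hz : s * Y 0 1 = 0 := by
            linear_combination (-1) * e01 - s * Y 0 1 * h2'
          exact (mul_eq_zero.1 hz).resolve_left hs0
        · have hz : s * Y 1 0 = 0 := by
            linear_combination e10 - s * Y 1 0 * h2'
          exact (mul_eq_zero.1 hz).resolve_left hs0
      · -- nonsplit case
        right; right
        have hε0 : ε ≠ 0 := fun h => hε 0 (by simp [h])
        have hεns : ¬ IsSquare ε := by
          rintro ⟨r, rfl⟩
          exact hε r (by ring)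
        have hΔε : IsSquare ((t ^ 2 - 4 * d) * ε) := by
          have q1 : quadraticChar (ZMod p) (t ^ 2 - 4 * d) = -1 :=
            (quadraticChar_neg_one_iff_not_isSquare).2 hsq
          have q2 : quadraticChar (ZMod p) ε = -1 :=
            (quadraticChar_neg_one_iff_not_isSquare).2 hεns
          have q3 : quadraticChar (ZMod p) ((t ^ 2 - 4 * d) * ε) = 1 := by
            rw [_root_.map_mul, q1, q2]; ring
          exact (quadraticChar_one_iff_isSquare (mul_ne_zero hΔ0 hε0)).1 q3
        obtain ⟨c, hc⟩ := hΔε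
        have hc0 : c ≠ 0 := by
          rintro rfl
          simp at hc
          exact hc.elim hΔ0 hε0
        set r : ZMod p := c * ε⁻¹ with hrdef
        have hεinv : ε * ε⁻¹ = 1 := mul_inv_cancel₀ hε0
        have hr : ε * r * r = t ^ 2 - 4 * d := by
          rw [hrdef]
          linear_combination (c * c * ε⁻¹) * hεinv - ε⁻¹ * hc + (t ^ 2 - 4 * d) * hεinv
        have hr0 : r ≠ 0 := by
          rintro h
          rw [h] at hr
          exact hΔ0 (by linear_combination -hr)
        have hb0 : half * r ≠ 0 := by
          intro h
          apply hr0
          have : (2 : ZMod p) * (half * r) = 2 * 0 := by rw [h]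
          simpa [← mul_assoc, mul_comm (2 : ZMod p) half, h2'] using this
        obtain ⟨m, hm⟩ := conj_to_form g₀ hg₀ !![half * t, ε * (half * r); half * r, half * t]
          (by
            rintro ⟨-, hc', -⟩
            exact hb0 hc')
          (by simp; linear_combination t * h2')
          (by
            rw [Matrix.det_fin_two_of]
            linear_combination (-(half * half)) * hr + d * (2 * half + 1) * h2')
        refine ⟨m, conjSub_le m G (Nns p ε) ?_⟩
        intro y hy
        have hcomm := comm_key m _ hm y hy
        set Y : Matrix (Fin 2) (Fin 2) (ZMod p) := ((m * y * m⁻¹ : GL2 p) : Matrix (Fin 2) (Fin 2) (ZMod p)) with hY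
        have e00 := congrFun (congrFun hcomm 0) 0
        have e01 := congrFun (congrFun hcomm 0) 1
        simp [Matrix.mul_apply, Fin.sum_univ_two] at e00 e01
        refine Or.inl ⟨?_, ?_⟩
        · have hz : (ε * (half * r)) * (Y 1 1 - Y 0 0) = 0 := by
            linear_combination (-1) * e01
          have := (mul_eq_zero.1 hz).resolve_left (mul_ne_zero hε0 hb0)
          linear_combination this
        · have hz : (half * r) * (Y 0 1 - ε * Y 1 0) = 0 := by
            linear_combination e00
          have := (mul_eq_zero.1 hz).resolve_left hb0
          linear_combination this
  · -- all scalar: contained in Borel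
    push_neg at hex
    left
    refine ⟨1, conjSub_le 1 G (B0 p) ?_⟩
    intro y hy
    have hsc := not_not.1 (hex y hy)
    have hyy : (1 : GL2 p) * y * 1⁻¹ = y := by group
    rw [hyy]
    exact hsc.2.1
end

section
/- Let p be an odd prime and let G be a subgroup of B₀(p). Then G is conjugate in GL₂(𝔽_p) to a subgroup of C_s(p) if and only if p does not divide the order of G. -/
open Matrix

/-! If `m G m⁻¹` consists of diagonal matrices, then `g ^ p = g` for every `g ∈ G` (Fermat's
little theorem entrywise), so `G` has no element of order `p`. Conversely, for upper triangular
`g = [[a, b], [0, d]]` the map `g ↦ b / d` is a crossed homomorphism for `g ↦ a / d`. When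
`p ∤ |G|`, averaging it over `G` shows that it is a coboundary `g ↦ (a / d - 1) t`, and this
says exactly that conjugation by `[[1, t], [0, 1]]` kills the upper right entry of every `g ∈ G`. -/

theorem not_prime_dvd_card_of_forall_pow_eq_self {G : Type*} [Group G] [Finite G] {p : ℕ}
    [Fact p.Prime] (h : ∀ g : G, g ^ p = g) : ¬ p ∣ Nat.card G := by
  intro hdvd
  obtain ⟨g, hg⟩ := exists_prime_orderOf_dvd_card' p hdvd
  have hg1 : g = 1 := by rw [← h g, ← hg, pow_orderOf_eq_one]
  exact (Fact.out : p.Prime).one_lt.ne' (by rw [← hg, hg1, orderOf_one])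

theorem exists_forall_eq_mul_sub_of_crossed {G K : Type*} [Group G] [Fintype G] [Field K]
    (χ c : G → K) (hc : ∀ g h, c (g * h) = χ g * c h + c g)
    (hG : (Fintype.card G : K) ≠ 0) : ∃ t : K, ∀ g, c g = χ g * t - t := by
  refine ⟨-(∑ h, c h) * (Fintype.card G : K)⁻¹, fun g => ?_⟩
  have hsum : ∑ h, c h = χ g * ∑ h, c h + Fintype.card G * c g := by
    calc ∑ h, c h = ∑ h, c (g * h) :=
          (Fintype.sum_equiv (Equiv.mulLeft g) _ _ fun _ => rfl).symm
      _ = χ g * ∑ h, c h + Fintype.card G * c g := by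
        simp only [hc, Finset.sum_add_distrib, ← Finset.mul_sum, Finset.sum_const,
          Finset.card_univ, nsmul_eq_mul]
  have hN : (Fintype.card G : K)⁻¹ * Fintype.card G = 1 := inv_mul_cancel₀ hG
  linear_combination -(Fintype.card G : K)⁻¹ * hsum - c g * hN

section GL2

variable {p : ℕ} [Fact p.Prime]

local notation "M" => Matrix (Fin 2) (Fin 2) (ZMod p)

theorem pow_prime_eq_self_of_mem_Cs {x : GL2 p} (hx : x ∈ Cs p) : x ^ p = x := by
  have hdiag : (x : M) = Matrix.diagonal ![(x : M) 0 0, (x : M) 1 1] := by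
    ext i j
    fin_cases i <;> fin_cases j <;> simp [hx.1, hx.2]
  ext : 1
  rw [Units.val_pow_eq_pow_val, hdiag, Matrix.diagonal_pow]
  congr 1
  ext i
  fin_cases i <;> simp [ZMod.pow_card]

theorem apply_one_one_ne_zero_of_mem_B0 {g : GL2 p} (hg : g ∈ B0 p) : (g : M) 1 1 ≠ 0 := by
  have hdet := g.det_ne_zero
  rw [Matrix.det_fin_two, show (g : M) 1 0 = 0 from hg] at hdet
  exact right_ne_zero_of_mul (by simpa using hdet)

def diagRatio (g : GL2 p) : ZMod p := (g : M) 0 0 / (g : M) 1 1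

def offDiagRatio (g : GL2 p) : ZMod p := (g : M) 0 1 / (g : M) 1 1

theorem offDiagRatio_mul {g h : GL2 p} (hg : g ∈ B0 p) (hh : h ∈ B0 p) :
    offDiagRatio (g * h) = diagRatio g * offDiagRatio h + offDiagRatio g := by
  have hg0 : (g : M) 1 0 = 0 := hg
  have hg1 := apply_one_one_ne_zero_of_mem_B0 hg
  have hh1 := apply_one_one_ne_zero_of_mem_B0 hh
  simp only [offDiagRatio, diagRatio, Units.val_mul, Matrix.mul_apply, Fin.sum_univ_two, hg0]
  field_simp
  ring

def upperUnipotent (t : ZMod p) : GL2 p where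
  val := !![1, t; 0, 1]
  inv := !![1, -t; 0, 1]
  val_inv := by simp [Matrix.one_fin_two]
  inv_val := by simp [Matrix.one_fin_two]

theorem conj_upperUnipotent_mem_Cs {g : GL2 p} (hg : g ∈ B0 p) {t : ZMod p}
    (ht : offDiagRatio g = diagRatio g * t - t) :
    MulAut.conj (upperUnipotent t) g ∈ Cs p := by
  have hg0 : (g : M) 1 0 = 0 := hg
  have hconj : (MulAut.conj (upperUnipotent t) g : M)
      = !![(g : M) 0 0, (g : M) 0 1 + t * ((g : M) 1 1 - (g : M) 0 0); 0, (g : M) 1 1] := by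
    rw [MulAut.conj_apply, Units.val_mul, Units.val_mul, Matrix.eta_fin_two (g : M), hg0]
    simp [upperUnipotent]
    ring
  have hg1 := apply_one_one_ne_zero_of_mem_B0 hg
  rw [offDiagRatio, diagRatio] at ht
  field_simp at ht
  have hoff : (g : M) 0 1 + t * ((g : M) 1 1 - (g : M) 0 0) = 0 := by linear_combination ht
  show (_ : M) 0 1 = 0 ∧ (_ : M) 1 0 = 0
  rw [hconj]
  exact ⟨hoff, rfl⟩

end GL2

theorem stmt5_general (p : ℕ) [Fact p.Prime]
    (G : Subgroup (GL2 p)) (hG : G ≤ B0 p) :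
    (∃ m : GL2 p, conjSub m G ≤ Cs p) ↔ ¬ (p ∣ Nat.card G) := by
  constructor
  · rintro ⟨m, hm⟩
    refine not_prime_dvd_card_of_forall_pow_eq_self fun g => Subtype.ext ?_
    apply (MulAut.conj m).injective
    simpa using pow_prime_eq_self_of_mem_Cs (hm (Subgroup.mem_map_of_mem _ g.2))
  · intro hp
    have : Fintype G := Fintype.ofFinite G
    obtain ⟨t, ht⟩ := exists_forall_eq_mul_sub_of_crossed
      (fun g : G => diagRatio (g : GL2 p)) (fun g : G => offDiagRatio (g : GL2 p))
      (fun g h => offDiagRatio_mul (hG g.2) (hG h.2))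
      (by rwa [← Nat.card_eq_fintype_card, Ne, ZMod.natCast_eq_zero_iff])
    refine ⟨upperUnipotent t, ?_⟩
    rintro _ ⟨g, hg, rfl⟩
    exact conj_upperUnipotent_mem_Cs (hG hg) (ht ⟨g, hg⟩)

theorem stmt5 (p : ℕ) [Fact p.Prime] (hp2 : p ≠ 2)
    (G : Subgroup (GL2 p)) (hG : G ≤ B0 p) :
    (∃ m : GL2 p, conjSub m G ≤ Cs p) ↔ ¬ (p ∣ Nat.card G) :=
  stmt5_general p G hG
end

section
/- Let p be an odd prime and let G be an abelian subgroup of B₀(p) such that p divides the order of G. Then G = ⟨γ, G ∩ Z(p)⟩, the subgroup generated by γ together with the scalar matrices contained in G. -/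
open Matrix

lemma lower_pow {p : ℕ} (g : GL2 p)
    (h : (g : Matrix (Fin 2) (Fin 2) (ZMod p)) 1 0 = 0) (n : ℕ) :
    ((g ^ n : GL2 p) : Matrix (Fin 2) (Fin 2) (ZMod p)) 1 0 = 0 :=
  (B0 p).pow_mem h n

lemma diag_pow {p : ℕ} (g : GL2 p)
    (h : (g : Matrix (Fin 2) (Fin 2) (ZMod p)) 1 0 = 0) (n : ℕ) :
    ((g ^ n : GL2 p) : Matrix (Fin 2) (Fin 2) (ZMod p)) 0 0 =
      ((g : Matrix (Fin 2) (Fin 2) (ZMod p)) 0 0) ^ n ∧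
    ((g ^ n : GL2 p) : Matrix (Fin 2) (Fin 2) (ZMod p)) 1 1 =
      ((g : Matrix (Fin 2) (Fin 2) (ZMod p)) 1 1) ^ n := by
  induction n with
  | zero => simp
  | succ n ih =>
    have hl := lower_pow g h n
    rw [pow_succ, Units.val_mul]
    constructor <;>
      · simp only [Matrix.mul_apply, Fin.sum_univ_two, h, hl, ih.1, ih.2,
          mul_zero, zero_mul, add_zero, zero_add]
        ring

lemma uni_pow {p : ℕ} (g : GL2 p)
    (h10 : (g : Matrix (Fin 2) (Fin 2) (ZMod p)) 1 0 = 0)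
    (h00 : (g : Matrix (Fin 2) (Fin 2) (ZMod p)) 0 0 = 1)
    (h11 : (g : Matrix (Fin 2) (Fin 2) (ZMod p)) 1 1 = 1) (n : ℕ) :
    ((g ^ n : GL2 p) : Matrix (Fin 2) (Fin 2) (ZMod p)) =
      !![1, (n : ZMod p) * (g : Matrix (Fin 2) (Fin 2) (ZMod p)) 0 1; 0, 1] := by
  induction n with
  | zero =>
    ext i j
    fin_cases i <;> fin_cases j <;> simp [Matrix.one_apply]
  | succ n ih =>
    rw [pow_succ, Units.val_mul, ih]
    ext i j
    fin_cases i <;> fin_cases j <;>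
      · simp [Matrix.mul_apply, Fin.sum_univ_two, h10, h00, h11]
        try push_cast
        try ring

set_option maxHeartbeats 1000000 in
theorem stmt6 (p : ℕ) [Fact p.Prime] (hp2 : p ≠ 2)
    (G : Subgroup (GL2 p)) (hG : G ≤ B0 p)
    (hab : ∀ a ∈ G, ∀ b ∈ G, a * b = b * a)
    (hcard : p ∣ Nat.card G) :
    G = Subgroup.closure ({gam p} ∪ (↑(G ⊓ Zs p) : Set (GL2 p))) := by
  haveI : NeZero p := ⟨(Fact.out : p.Prime).ne_zero⟩
  haveI : Fintype ↥G := Fintype.ofFinite _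
  obtain ⟨x, hx⟩ := exists_prime_orderOf_dvd_card (G := ↥G) p
    (by rwa [← Nat.card_eq_fintype_card])
  obtain ⟨g, hgG, hog⟩ : ∃ g ∈ G, orderOf g = p :=
    ⟨x, x.2, (orderOf_injective G.subtype G.subtype_injective x).trans hx⟩
  have h10 : (g : Matrix (Fin 2) (Fin 2) (ZMod p)) 1 0 = 0 := hG hgG
  have hgp : g ^ p = 1 := by
    have h := pow_orderOf_eq_one g
    rwa [hog] at h
  have hd := diag_pow g h10 p
  rw [hgp] at hd
  have h00 : (g : Matrix (Fin 2) (Fin 2) (ZMod p)) 0 0 = 1 := by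
    have h := hd.1
    rw [ZMod.pow_card] at h
    simpa using h.symm
  have h11 : (g : Matrix (Fin 2) (Fin 2) (ZMod p)) 1 1 = 1 := by
    have h := hd.2
    rw [ZMod.pow_card] at h
    simpa using h.symm
  set b := (g : Matrix (Fin 2) (Fin 2) (ZMod p)) 0 1 with hbdef
  have hb : b ≠ 0 := by
    intro h0
    have hg1 : g = 1 := by
      refine Units.ext ?_
      ext i j
      fin_cases i <;> fin_cases j <;>
        simp [h00, h11, h10, ← hbdef, h0, Matrix.one_apply]
    rw [hg1, orderOf_one] at hog
    exact (Fact.out : p.Prime).ne_one hog.symm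
  -- γ is a power of g, hence lies in G
  have hmb : ((b⁻¹.val : ℕ) : ZMod p) * b = 1 := by
    simp [ZMod.natCast_val, ZMod.cast_id, inv_mul_cancel₀ hb]
  have hγ : gam p = g ^ (b⁻¹.val) := by
    refine Units.ext ?_
    rw [uni_pow g h10 h00 h11, ← hbdef, hmb]
    rfl
  have hγG : gam p ∈ G := hγ ▸ G.pow_mem hgG _
  -- inverse of γ is also unipotent
  have hi10 : ((gam p)⁻¹ : GL2 p).val 1 0 = 0 := by simp [gam]
  have hi00 : ((gam p)⁻¹ : GL2 p).val 0 0 = 1 := by simp [gam]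
  have hi11 : ((gam p)⁻¹ : GL2 p).val 1 1 = 1 := by simp [gam]
  have hi01 : ((gam p)⁻¹ : GL2 p).val 0 1 = -1 := by simp [gam]
  refine le_antisymm ?_ ((Subgroup.closure_le G).2 ?_)
  swap
  · exact Set.union_subset (by simpa using hγG)
      (SetLike.coe_subset_coe.mpr inf_le_left)
  intro y hyG
  set Y : Matrix (Fin 2) (Fin 2) (ZMod p) := (y : Matrix (Fin 2) (Fin 2) (ZMod p)) with hYdef
  have hy10 : Y 1 0 = 0 := hG hyG
  -- commuting with g forces equal diagonal entries
  have hcomm := hab y hyG g hgG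
  have hce := congrArg (fun u : GL2 p => (u : Matrix (Fin 2) (Fin 2) (ZMod p)) 0 1) hcomm
  simp only [Units.val_mul, Matrix.mul_apply, Fin.sum_univ_two, h00, h11, h10, ← hbdef,
    hy10, ← hYdef] at hce
  have hdiag : Y 1 1 = Y 0 0 := by
    refine mul_left_cancel₀ hb ?_
    linear_combination -hce
  -- Y 0 0 is nonzero since y is invertible
  have hdet : Y.det * ((↑y⁻¹ : Matrix (Fin 2) (Fin 2) (ZMod p)).det) = 1 := by
    rw [← Matrix.det_mul, ← Units.val_mul, mul_inv_cancel]
    simp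
  have hY00 : Y 0 0 ≠ 0 := by
    intro h0
    rw [Matrix.det_fin_two, hy10, hdiag, h0] at hdet
    simp at hdet
  set k : ℕ := (Y 0 1 * (Y 0 0)⁻¹).val with hkdef
  have hk : ((k : ℕ) : ZMod p) = Y 0 1 * (Y 0 0)⁻¹ := by
    simp [hkdef, ZMod.natCast_val, ZMod.cast_id]
  set w : GL2 p := ((gam p) ^ k)⁻¹ * y with hwdef
  have hwmat : (w : Matrix (Fin 2) (Fin 2) (ZMod p)) =
      ((((gam p)⁻¹) ^ k : GL2 p) : Matrix (Fin 2) (Fin 2) (ZMod p)) * Y := by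
    rw [hwdef, ← inv_pow, Units.val_mul]
  rw [uni_pow ((gam p)⁻¹) hi10 hi00 hi11 k, hi01] at hwmat
  have hkY : (k : ZMod p) * Y 0 0 = Y 0 1 := by
    rw [hk, inv_mul_cancel_right₀ hY00]
  have hw01 : (w : Matrix (Fin 2) (Fin 2) (ZMod p)) 0 1 = 0 := by
    rw [hwmat]
    simp [Matrix.mul_apply, Fin.sum_univ_two, hdiag]
    linear_combination -hkY
  have hw10 : (w : Matrix (Fin 2) (Fin 2) (ZMod p)) 1 0 = 0 := by
    rw [hwmat]; simp [Matrix.mul_apply, Fin.sum_univ_two, hy10]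
  have hwd : (w : Matrix (Fin 2) (Fin 2) (ZMod p)) 1 1 =
      (w : Matrix (Fin 2) (Fin 2) (ZMod p)) 0 0 := by
    rw [hwmat]
    simp [Matrix.mul_apply, Fin.sum_univ_two, hy10, hdiag]
  have hwG : w ∈ G := G.mul_mem (G.inv_mem (G.pow_mem hγG k)) hyG
  have hwZ : w ∈ G ⊓ Zs p := Subgroup.mem_inf.mpr ⟨hwG, ⟨hw01, hw10, hwd⟩⟩
  have hy : y = (gam p) ^ k * w := by rw [hwdef, mul_inv_cancel_left]
  rw [hy]
  have hmem1 : gam p ∈ ({gam p} ∪ (↑(G ⊓ Zs p) : Set (GL2 p))) :=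
    Set.mem_union_left _ (Set.mem_singleton _)
  have hmem2 : w ∈ ({gam p} ∪ (↑(G ⊓ Zs p) : Set (GL2 p))) :=
    Set.mem_union_right _ (SetLike.mem_coe.mpr hwZ)
  exact Subgroup.mul_mem _
    (Subgroup.pow_mem _ (Subgroup.subset_closure hmem1) k)
    (Subgroup.subset_closure hmem2)
end

section
/- Let p be an odd prime and let G be an abelian subgroup of N_s(p) that is not contained in C_s(p). Then G ∩ C_s(p) = G ∩ Z(p), and for every element n ∈ G with n ∉ C_s(p) one has G = ⟨n, G ∩ Z(p)⟩. -/
open Matrix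

lemma antidiag_entries {p : ℕ} {n : GL2 p} (hn : n ∈ Ns p) (hnc : n ∉ Cs p) :
    (n : Matrix (Fin 2) (Fin 2) (ZMod p)) 0 0 = 0 ∧
      (n : Matrix (Fin 2) (Fin 2) (ZMod p)) 1 1 = 0 := by
  rcases hn with h | h
  · exact absurd h hnc
  · exact h

lemma antidiag_ne {p : ℕ} [Fact p.Prime] {n : GL2 p}
    (h0 : (n : Matrix (Fin 2) (Fin 2) (ZMod p)) 0 0 = 0)
    (h1 : (n : Matrix (Fin 2) (Fin 2) (ZMod p)) 1 1 = 0) :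
    (n : Matrix (Fin 2) (Fin 2) (ZMod p)) 0 1 ≠ 0 ∧
      (n : Matrix (Fin 2) (Fin 2) (ZMod p)) 1 0 ≠ 0 := by
  have hd : IsUnit ((n : Matrix (Fin 2) (Fin 2) (ZMod p)).det) :=
    (Matrix.isUnit_iff_isUnit_det _).mp n.isUnit
  rw [Matrix.det_fin_two, h0, h1] at hd
  have hne : (n : Matrix (Fin 2) (Fin 2) (ZMod p)) 0 1 *
      (n : Matrix (Fin 2) (Fin 2) (ZMod p)) 1 0 ≠ 0 := by
    intro h
    simp [h] at hd
  exact ⟨left_ne_zero_of_mul hne, right_ne_zero_of_mul hne⟩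

theorem stmt7 (p : ℕ) [Fact p.Prime] (hp2 : p ≠ 2)
    (G : Subgroup (GL2 p)) (hG : G ≤ Ns p)
    (hab : ∀ a ∈ G, ∀ b ∈ G, a * b = b * a)
    (hnot : ¬ G ≤ Cs p) :
    G ⊓ Cs p = G ⊓ Zs p ∧
    ∀ n ∈ G, n ∉ Cs p → G = Subgroup.closure ({n} ∪ (↑(G ⊓ Zs p) : Set (GL2 p))) := by
  obtain ⟨n0, hn0G, hn0C⟩ : ∃ x ∈ G, x ∉ Cs p := by
    by_contra h
    push_neg at h
    exact hnot fun x hx => h x hx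
  have h00 := antidiag_entries (hG hn0G) hn0C
  obtain ⟨hn01, hn10⟩ := antidiag_ne h00.1 h00.2
  have key : ∀ g ∈ G, g ∈ Cs p → g ∈ Zs p := by
    intro g hg hgC
    obtain ⟨hg1, hg2⟩ := hgC
    have hc := hab g hg n0 hn0G
    have hEq := congrArg (fun u : GL2 p => (u : Matrix (Fin 2) (Fin 2) (ZMod p)) 0 1) hc
    simp only [Units.val_mul, Matrix.mul_apply, Fin.sum_univ_two, hg1, hg2,
      h00.1, h00.2, mul_zero, zero_mul, add_zero, zero_add] at hEq
    refine ⟨hg1, hg2, ?_⟩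
    have : (n0 : Matrix (Fin 2) (Fin 2) (ZMod p)) 0 1 *
        ((g : Matrix (Fin 2) (Fin 2) (ZMod p)) 1 1) =
        (n0 : Matrix (Fin 2) (Fin 2) (ZMod p)) 0 1 *
        ((g : Matrix (Fin 2) (Fin 2) (ZMod p)) 0 0) := by
      linear_combination -hEq
    exact mul_left_cancel₀ hn01 this
  have hfst : G ⊓ Cs p = G ⊓ Zs p := by
    ext g
    simp only [Subgroup.mem_inf]
    constructor
    · rintro ⟨hg, hc⟩
      exact ⟨hg, key g hg hc⟩
    · rintro ⟨hg, hz⟩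
      exact ⟨hg, hz.1, hz.2.1⟩
  refine ⟨hfst, ?_⟩
  intro n hnG hnC
  have hn00 := antidiag_entries (hG hnG) hnC
  apply le_antisymm
  · intro m hm
    by_cases hmC : m ∈ Cs p
    · exact Subgroup.subset_closure (Or.inr (by exact ⟨hm, key m hm hmC⟩))
    · have hm00 := antidiag_entries (hG hm) hmC
      have hninvC : n⁻¹ ∉ Cs p := fun h => hnC (by simpa using (Cs p).inv_mem h)
      have hi00 := antidiag_entries ((Ns p).inv_mem (hG hnG)) hninvC
      simp only [Matrix.coe_units_inv] at hi00
      have hprod : m * n⁻¹ ∈ Cs p := by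
        constructor <;>
          simp [Units.val_mul, Matrix.mul_apply, Fin.sum_univ_two, hm00.1, hm00.2,
            Matrix.coe_units_inv, hi00.1, hi00.2]
      have hmem : m * n⁻¹ ∈ G := G.mul_mem hm (G.inv_mem hnG)
      have hz : m * n⁻¹ ∈ G ⊓ Zs p := ⟨hmem, key _ hmem hprod⟩
      have h1 : (m * n⁻¹ : GL2 p) ∈ Subgroup.closure ({n} ∪ (↑(G ⊓ Zs p) : Set (GL2 p))) :=
        Subgroup.subset_closure (Or.inr hz)
      have h2 : n ∈ Subgroup.closure ({n} ∪ (↑(G ⊓ Zs p) : Set (GL2 p))) :=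
        Subgroup.subset_closure (Or.inl rfl)
      have := mul_mem h1 h2
      simpa using this
  · rw [Subgroup.closure_le]
    rintro x (rfl | hx)
    · exact hnG
    · exact hx.1
end

section
/- Let p be an odd prime and let G be an abelian subgroup of N_ns(p) that is not contained in C_ns(p). Then G ∩ C_ns(p) = G ∩ Z(p), and for every element n ∈ G with n ∉ C_ns(p) one has G = ⟨n, G ∩ Z(p)⟩. -/
open Matrix

lemma mul_entry {p : ℕ} (a b : GL2 p) (i j : Fin 2) :
    ((a * b : GL2 p) : Matrix (Fin 2) (Fin 2) (ZMod p)) i j =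
      (a : Matrix (Fin 2) (Fin 2) (ZMod p)) i 0 * (b : Matrix (Fin 2) (Fin 2) (ZMod p)) 0 j +
      (a : Matrix (Fin 2) (Fin 2) (ZMod p)) i 1 * (b : Matrix (Fin 2) (Fin 2) (ZMod p)) 1 j := by
  simp [Units.val_mul, Matrix.mul_apply, Fin.sum_univ_two]

lemma zs_le_cns {p : ℕ} (ε : ZMod p) : Zs p ≤ Cns p ε := by
  rintro g ⟨h1, h2, h3⟩
  exact ⟨h3, by rw [h1, h2, mul_zero]⟩

lemma mul_second {p : ℕ} {ε : ZMod p} {g h : GL2 p}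
    (hg1 : (g : Matrix (Fin 2) (Fin 2) (ZMod p)) 1 1 = -(g : Matrix (Fin 2) (Fin 2) (ZMod p)) 0 0)
    (hg2 : (g : Matrix (Fin 2) (Fin 2) (ZMod p)) 0 1 =
      -(ε * (g : Matrix (Fin 2) (Fin 2) (ZMod p)) 1 0))
    (hh1 : (h : Matrix (Fin 2) (Fin 2) (ZMod p)) 1 1 = -(h : Matrix (Fin 2) (Fin 2) (ZMod p)) 0 0)
    (hh2 : (h : Matrix (Fin 2) (Fin 2) (ZMod p)) 0 1 =
      -(ε * (h : Matrix (Fin 2) (Fin 2) (ZMod p)) 1 0)) :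
    g * h ∈ Cns p ε := by
  constructor <;> simp [mul_entry, hg1, hg2, hh1, hh2] <;> ring

lemma key_scalar {p : ℕ} [Fact p.Prime] (hp2 : p ≠ 2) {ε : ZMod p} (hε0 : ε ≠ 0)
    {c n : GL2 p} (hc : c ∈ Cns p ε)
    (hn1 : (n : Matrix (Fin 2) (Fin 2) (ZMod p)) 1 1 = -(n : Matrix (Fin 2) (Fin 2) (ZMod p)) 0 0)
    (hn2 : (n : Matrix (Fin 2) (Fin 2) (ZMod p)) 0 1 =
      -(ε * (n : Matrix (Fin 2) (Fin 2) (ZMod p)) 1 0))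
    (hcomm : c * n = n * c) : c ∈ Zs p := by
  obtain ⟨hc1, hc2⟩ := hc
  have h2 : (2 : ZMod p) ≠ 0 := by
    intro h
    have hd : (p : ℕ) ∣ 2 :=
      (ZMod.natCast_eq_zero_iff 2 p).mp (by exact_mod_cast h)
    rcases (Nat.prime_two.eq_one_or_self_of_dvd p hd) with h' | h'
    · exact (Fact.out : p.Prime).one_lt.ne' h'
    · exact hp2 h'
  set C := (c : Matrix (Fin 2) (Fin 2) (ZMod p)) with hC
  set N := (n : Matrix (Fin 2) (Fin 2) (ZMod p)) with hN
  have e00 : C 0 0 * N 0 0 + C 0 1 * N 1 0 = N 0 0 * C 0 0 + N 0 1 * C 1 0 := by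
    have := congrArg (fun u : GL2 p => (u : Matrix (Fin 2) (Fin 2) (ZMod p)) 0 0) hcomm
    simpa [mul_entry] using this
  have e10 : C 1 0 * N 0 0 + C 1 1 * N 1 0 = N 1 0 * C 0 0 + N 1 1 * C 1 0 := by
    have := congrArg (fun u : GL2 p => (u : Matrix (Fin 2) (Fin 2) (ZMod p)) 1 0) hcomm
    simpa [mul_entry] using this
  have hA : C 1 0 * N 1 0 = 0 := by
    have h2ε : (2 : ZMod p) * ε ≠ 0 := mul_ne_zero h2 hε0
    have : (2 : ZMod p) * ε * (C 1 0 * N 1 0) = 0 := by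
      rw [hc2, hn2] at e00; linear_combination e00
    rcases mul_eq_zero.mp this with h | h
    · exact absurd h h2ε
    · exact h
  have hB : C 1 0 * N 0 0 = 0 := by
    have : (2 : ZMod p) * (C 1 0 * N 0 0) = 0 := by
      rw [hc1, hn1] at e10; linear_combination e10
    rcases mul_eq_zero.mp this with h | h
    · exact absurd h h2
    · exact h
  by_cases hc10 : C 1 0 = 0
  · exact ⟨show C 0 1 = 0 by rw [hc2, hc10, mul_zero], hc10, hc1⟩
  · exfalso
    have hN10 : N 1 0 = 0 := by
      rcases mul_eq_zero.mp hA with h | h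
      · exact absurd h hc10
      · exact h
    have hN00 : N 0 0 = 0 := by
      rcases mul_eq_zero.mp hB with h | h
      · exact absurd h hc10
      · exact h
    have hN01 : N 0 1 = 0 := by rw [hn2, hN10, mul_zero, neg_zero]
    have h1 := congrArg (fun m : Matrix (Fin 2) (Fin 2) (ZMod p) => m 0 0) n.val_inv
    simp [Matrix.mul_apply, Fin.sum_univ_two, ← hN, hN00, hN01, Matrix.one_apply] at h1

theorem stmt8 (p : ℕ) [Fact p.Prime] (hp2 : p ≠ 2)
    (ε : ZMod p) (hε : ∀ x : ZMod p, x ^ 2 ≠ ε)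
    (G : Subgroup (GL2 p)) (hG : G ≤ Nns p ε)
    (hab : ∀ a ∈ G, ∀ b ∈ G, a * b = b * a)
    (hnot : ¬ G ≤ Cns p ε) :
    G ⊓ Cns p ε = G ⊓ Zs p ∧
    ∀ n ∈ G, n ∉ Cns p ε → G = Subgroup.closure ({n} ∪ (↑(G ⊓ Zs p) : Set (GL2 p))) := by
  have hε0 : ε ≠ 0 := fun h => hε 0 (by simp [h])
  obtain ⟨n₀, hn₀G, hn₀C⟩ := SetLike.not_le_iff_exists.mp hnot
  have hn₀ : (n₀ : Matrix (Fin 2) (Fin 2) (ZMod p)) 1 1 =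
      -(n₀ : Matrix (Fin 2) (Fin 2) (ZMod p)) 0 0 ∧
      (n₀ : Matrix (Fin 2) (Fin 2) (ZMod p)) 0 1 =
      -(ε * (n₀ : Matrix (Fin 2) (Fin 2) (ZMod p)) 1 0) := by
    rcases hG hn₀G with h | h
    · exact absurd h hn₀C
    · exact h
  have hpart1 : G ⊓ Cns p ε = G ⊓ Zs p := by
    ext g
    constructor
    · rintro ⟨hgG, hgC⟩
      exact ⟨hgG, key_scalar hp2 hε0 hgC hn₀.1 hn₀.2 (hab g hgG n₀ hn₀G)⟩
    · rintro ⟨hgG, hgZ⟩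
      exact ⟨hgG, zs_le_cns ε hgZ⟩
  refine ⟨hpart1, fun n hnG hnC => ?_⟩
  have hn : (n : Matrix (Fin 2) (Fin 2) (ZMod p)) 1 1 =
      -(n : Matrix (Fin 2) (Fin 2) (ZMod p)) 0 0 ∧
      (n : Matrix (Fin 2) (Fin 2) (ZMod p)) 0 1 =
      -(ε * (n : Matrix (Fin 2) (Fin 2) (ZMod p)) 1 0) := by
    rcases hG hnG with h | h
    · exact absurd h hnC
    · exact h
  refine le_antisymm ?_ ?_
  · intro g hgG
    by_cases hgC : g ∈ Cns p ε
    · have : g ∈ G ⊓ Zs p := hpart1 ▸ ⟨hgG, hgC⟩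
      exact Subgroup.subset_closure (Or.inr this)
    · have hg : (g : Matrix (Fin 2) (Fin 2) (ZMod p)) 1 1 =
          -(g : Matrix (Fin 2) (Fin 2) (ZMod p)) 0 0 ∧
          (g : Matrix (Fin 2) (Fin 2) (ZMod p)) 0 1 =
          -(ε * (g : Matrix (Fin 2) (Fin 2) (ZMod p)) 1 0) := by
        rcases hG hgG with h | h
        · exact absurd h hgC
        · exact h
      have hng : n * g ∈ G ⊓ Zs p :=
        hpart1 ▸ ⟨G.mul_mem hnG hgG, mul_second hn.1 hn.2 hg.1 hg.2⟩
      have hmemn : n ∈ Subgroup.closure ({n} ∪ (↑(G ⊓ Zs p) : Set (GL2 p))) :=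
        Subgroup.subset_closure (Or.inl rfl)
      have hmemng : n * g ∈ Subgroup.closure ({n} ∪ (↑(G ⊓ Zs p) : Set (GL2 p))) :=
        Subgroup.subset_closure (Or.inr hng)
      have : g = n⁻¹ * (n * g) := by group
      rw [this]
      exact Subgroup.mul_mem _ (Subgroup.inv_mem _ hmemn) hmemng
  · refine (Subgroup.closure_le G).mpr (Set.union_subset ?_ ?_)
    · simpa using hnG
    · exact fun x hx => hx.1
end

section
/- Let p be an odd prime and k ≥ 1 an integer. If some GL₂(𝔽_p)-conjugate of D^k is contained in the subgroup ⟨γ, Z(p)⟩ generated by γ and the scalar matrices, then p − 1 divides k. -/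
open Matrix

/-- Upper triangular matrices with equal diagonal entries. -/
def Usub (p : ℕ) : Subgroup (GL2 p) where
  carrier := { g | (g : Matrix (Fin 2) (Fin 2) (ZMod p)) 1 0 = 0 ∧
      (g : Matrix (Fin 2) (Fin 2) (ZMod p)) 1 1 = (g : Matrix (Fin 2) (Fin 2) (ZMod p)) 0 0 }
  one_mem' := by simp
  mul_mem' := by
    rintro a b ⟨ha1, ha2⟩ ⟨hb1, hb2⟩
    refine ⟨?_, ?_⟩ <;>
      simp [Units.val_mul, Matrix.mul_apply, Fin.sum_univ_two, ha1, ha2, hb1, hb2]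
  inv_mem' := by
    rintro a ⟨h1, h2⟩
    have hh : ((a⁻¹ : GL2 p) : Matrix (Fin 2) (Fin 2) (ZMod p))
        = Ring.inverse ((a : Matrix (Fin 2) (Fin 2) (ZMod p)).det) •
          Matrix.adjugate (a : Matrix (Fin 2) (Fin 2) (ZMod p)) := by
      rw [Matrix.coe_units_inv, Matrix.inv_def]
    refine ⟨?_, ?_⟩ <;> simp [hh, Matrix.adjugate_fin_two, h1, h2]

lemma closure_le_Usub (p : ℕ) :
    Subgroup.closure ({gam p} ∪ (↑(Zs p) : Set (GL2 p))) ≤ Usub p := by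
  rw [Subgroup.closure_le]
  rintro g (hg | hg)
  · rcases hg with rfl
    constructor <;> simp [gam, Usub]
  · exact ⟨hg.2.1, hg.2.2⟩

theorem stmt10 (p : ℕ) [Fact p.Prime] (hp2 : p ≠ 2)
    (k : ℕ) (hk : 1 ≤ k)
    (hconj : ∃ m : GL2 p,
      conjSub m (Dpow p k) ≤ Subgroup.closure ({gam p} ∪ (↑(Zs p) : Set (GL2 p)))) :
    (p - 1) ∣ k := by
  obtain ⟨m, hm⟩ := hconj
  have key : ∀ a : (ZMod p)ˣ, a ^ k = 1 := by
    intro a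
    set d : GL2 p := dMat p (a ^ k) with hd
    have hdmem : d ∈ Dpow p k := ⟨a, rfl⟩
    have hgmem : m * d * m⁻¹ ∈ Usub p := by
      apply closure_le_Usub p
      exact hm ⟨d, hdmem, rfl⟩
    set N : Matrix (Fin 2) (Fin 2) (ZMod p) := ((m * d * m⁻¹ : GL2 p) : Matrix (Fin 2) (Fin 2) (ZMod p)) with hN
    obtain ⟨h10, h11⟩ := hgmem
    set M : Matrix (Fin 2) (Fin 2) (ZMod p) := (m : Matrix (Fin 2) (Fin 2) (ZMod p))
    set Mi : Matrix (Fin 2) (Fin 2) (ZMod p) := ((m⁻¹ : GL2 p) : Matrix (Fin 2) (Fin 2) (ZMod p))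
    have hMM : Mi * M = 1 := by
      show ((m⁻¹ : GL2 p) : Matrix (Fin 2) (Fin 2) (ZMod p)) * (m : Matrix (Fin 2) (Fin 2) (ZMod p)) = 1
      rw [← Units.val_mul, inv_mul_cancel, Units.val_one]
    have hNeq : N = M * (d : Matrix (Fin 2) (Fin 2) (ZMod p)) * Mi := rfl
    rw [← hN] at h10 h11
    have htr : N.trace = ((a : ZMod p)) ^ k + 1 := by
      rw [hNeq, Matrix.trace_mul_comm, ← Matrix.mul_assoc, hMM, Matrix.one_mul]
      simp [hd, dMat, Matrix.trace_fin_two]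
    have hdet : N.det = ((a : ZMod p)) ^ k := by
      rw [hNeq, Matrix.det_mul, Matrix.det_mul]
      have : M.det * Mi.det = 1 := by
        rw [← Matrix.det_mul]
        show ((m : Matrix (Fin 2) (Fin 2) (ZMod p)) * ((m⁻¹ : GL2 p) : Matrix (Fin 2) (Fin 2) (ZMod p))).det = 1
        rw [← Units.val_mul, mul_inv_cancel, Units.val_one, Matrix.det_one]
      calc M.det * (d : Matrix (Fin 2) (Fin 2) (ZMod p)).det * Mi.det
          = (d : Matrix (Fin 2) (Fin 2) (ZMod p)).det * (M.det * Mi.det) := by ring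
        _ = ((a : ZMod p)) ^ k := by rw [this]; simp [hd, dMat, Matrix.det_fin_two]
    set c : ZMod p := N 0 0 with hc
    have htr' : c + c = ((a : ZMod p)) ^ k + 1 := by
      rw [← htr, Matrix.trace_fin_two, h11]
    have hdet' : c * c = ((a : ZMod p)) ^ k := by
      rw [← hdet, Matrix.det_fin_two, h10, h11]; ring
    have hc1 : (c - 1) ^ 2 = 0 := by
      have : c * c - (c + c) + 1 = 0 := by rw [htr', hdet']; ring
      linear_combination this
    have hc2 : c = 1 := by
      have := pow_eq_zero_iff (n := 2) (by norm_num) |>.mp hc1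
      linear_combination this
    have : ((a : ZMod p)) ^ k = 1 := by rw [← hdet', hc2, mul_one]
    ext
    push_cast
    exact this
  obtain ⟨g, hg⟩ := IsCyclic.exists_generator (α := (ZMod p)ˣ)
  have horder : orderOf g = p - 1 := by
    rw [orderOf_eq_card_of_forall_mem_zpowers hg, Nat.card_eq_fintype_card, ZMod.card_units_eq_totient,
      Nat.totient_prime Fact.out]
  rw [← horder]
  exact orderOf_dvd_of_pow_eq_one (key g)
end
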